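/- arXiv:1505.01136 — 9 statements merged into one kernel-verified Lean document; each statement's English description precedes it below -/
import Mathlib

section
/- Let M, N ≥ 1, let γ̄ ∈ ℝ_{>0}^{(M)^N} be a tensor with strictly positive entries, let ρ ∈ ℝ_{>0}^M, and fix i ∈ {1,...,N}. Define C_i as the set of nonnegative tensors γ ∈ ℝ_{≥0}^{(M)^N} whose i-th marginal equals ρ, i.e. ∑_{j_1,...,j_{i-1},j_{i+1},...,j_N} γ_{j_1,...,j_N} = ρ_{j_i} for every j_i ∈ {1,...,M}. Then the tensor P defined by P_{j_1,...,j_N} = ρ_{j_i} · γ̄_{j_1,...,j_N} / (∑_{k_1,...,k_{i-1},k_{i+1},...,k_N} γ̄_{k_1,...,k_{i-1},j_i,k_{i+1},...,k_N}) belongs to C_i and is the unique minimizer over γ ∈ C_i of the Kullback–Leibler divergence KL(γ|γ̄) = ∑_{j_1,...,j_N} γ_{j_1,...,j_N} log(γ_{j_1,...,j_N}/γ̄_{j_1,...,j_N}). -/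
/-!
For `γ` with `i`-th marginal `ρ`, the ratio `P / γ̄` depends only on `j i`, so
`∑ γ log (P / γ̄)` is determined by the marginal of `γ` and equals `KL(P|γ̄)`. This gives the
Pythagorean identity `KL(γ|γ̄) = KL(γ|P) + KL(P|γ̄)`. As `γ` and `P` have the same total mass,
`KL(γ|P) = ∑ P · klFun (γ / P)` with `klFun x = x log x + 1 - x ≥ 0`, vanishing only at `x = 1`.
-/

open Finset Real InformationTheory

section RelEntropy

variable {α : Type*} [Fintype α]

/-- The convention `0 · log 0 = 0` holds because `Real.log 0 = 0`. -/
noncomputable def relEntropy (γ p : α → ℝ) : ℝ := ∑ a, γ a * log (γ a / p a)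

lemma mul_log_div_eq_add {x y z : ℝ} (hy : y ≠ 0) (hz : z ≠ 0) :
    x * log (x / z) = x * log (x / y) + x * log (y / z) := by
  rcases eq_or_ne x 0 with rfl | hx
  · simp
  · rw [← mul_add, ← log_mul (div_ne_zero hx hy) (div_ne_zero hy hz), div_mul_div_cancel₀ hy]

lemma relEntropy_eq_add (γ : α → ℝ) {p q : α → ℝ} (hp : ∀ a, p a ≠ 0) (hq : ∀ a, q a ≠ 0) :
    relEntropy γ q = relEntropy γ p + ∑ a, γ a * log (p a / q a) := by
  rw [relEntropy, relEntropy, ← sum_add_distrib]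
  exact sum_congr rfl fun a _ => mul_log_div_eq_add (hp a) (hq a)

lemma mul_log_div_eq_mul_klFun (x : ℝ) {y : ℝ} (hy : y ≠ 0) :
    x * log (x / y) = y * klFun (x / y) + (x - y) := by
  rw [klFun_apply]
  field_simp
  ring

/-- Equal total masses make the linear correction terms cancel. -/
lemma relEntropy_eq_sum_mul_klFun {γ p : α → ℝ} (hp : ∀ a, p a ≠ 0)
    (hsum : ∑ a, γ a = ∑ a, p a) :
    relEntropy γ p = ∑ a, p a * klFun (γ a / p a) := by
  simp only [relEntropy, mul_log_div_eq_mul_klFun _ (hp _), sum_add_distrib, sum_sub_distrib,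
    hsum, sub_self, add_zero]

lemma relEntropy_nonneg {γ p : α → ℝ} (hγ : ∀ a, 0 ≤ γ a) (hp : ∀ a, 0 < p a)
    (hsum : ∑ a, γ a = ∑ a, p a) : 0 ≤ relEntropy γ p := by
  rw [relEntropy_eq_sum_mul_klFun (fun a => (hp a).ne') hsum]
  exact sum_nonneg fun a _ => mul_nonneg (hp a).le (klFun_nonneg (div_nonneg (hγ a) (hp a).le))

lemma relEntropy_eq_zero_iff {γ p : α → ℝ} (hγ : ∀ a, 0 ≤ γ a) (hp : ∀ a, 0 < p a)
    (hsum : ∑ a, γ a = ∑ a, p a) : relEntropy γ p = 0 ↔ γ = p := by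
  have hkl : ∀ a, 0 ≤ γ a / p a := fun a => div_nonneg (hγ a) (hp a).le
  rw [relEntropy_eq_sum_mul_klFun (fun a => (hp a).ne') hsum,
    sum_eq_zero_iff_of_nonneg fun a _ => mul_nonneg (hp a).le (klFun_nonneg (hkl a)), funext_iff]
  refine forall_congr' fun a => ?_
  rw [mul_eq_zero_iff_left (hp a).ne', klFun_eq_zero_iff (hkl a), div_eq_one_iff_eq (hp a).ne']
  simp

end RelEntropy

section Marginal

variable {α β : Type*} [Fintype α] [DecidableEq β]

def marginal (f : α → β) (γ : α → ℝ) (b : β) : ℝ := ∑ a ∈ univ.filter (fun a => f a = b), γ a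

noncomputable def marginalRescale (f : α → β) (w : α → ℝ) (ρ : β → ℝ) (a : α) : ℝ :=
  ρ (f a) * w a / marginal f w (f a)

lemma sum_mul_comp_eq_sum_marginal_mul [Fintype β] (f : α → β) (γ : α → ℝ) (g : β → ℝ) :
    ∑ a, γ a * g (f a) = ∑ b, marginal f γ b * g b := by
  rw [← sum_fiberwise univ f]
  refine sum_congr rfl fun b _ => ?_
  rw [marginal, sum_mul]
  exact sum_congr rfl fun a ha => by rw [(mem_filter.1 ha).2]

lemma sum_eq_sum_marginal [Fintype β] (f : α → β) (γ : α → ℝ) :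
    ∑ a, γ a = ∑ b, marginal f γ b := by
  simpa using sum_mul_comp_eq_sum_marginal_mul f γ 1

variable {f : α → β} {w : α → ℝ}

lemma sum_eq_sum_of_marginal_eq [Fintype β] {γ η : α → ℝ}
    (h : marginal f γ = marginal f η) : ∑ a, γ a = ∑ a, η a := by
  rw [sum_eq_sum_marginal f γ, sum_eq_sum_marginal f η, h]

lemma marginalRescale_div (hw : ∀ a, 0 < w a) (ρ : β → ℝ) (a : α) :
    marginalRescale f w ρ a / w a = ρ (f a) / marginal f w (f a) := by
  rw [marginalRescale, mul_div_right_comm, mul_div_assoc, div_self (hw a).ne', mul_one]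

lemma marginal_pos (hf : Function.Surjective f) (hw : ∀ a, 0 < w a) (b : β) :
    0 < marginal f w b := by
  obtain ⟨a, rfl⟩ := hf b
  exact sum_pos (fun a _ => hw a) ⟨a, mem_filter.2 ⟨mem_univ a, rfl⟩⟩

variable (hf : Function.Surjective f) (hw : ∀ a, 0 < w a)
include hf hw

lemma marginalRescale_pos {ρ : β → ℝ} (hρ : ∀ b, 0 < ρ b) (a : α) :
    0 < marginalRescale f w ρ a :=
  div_pos (mul_pos (hρ _) (hw a)) (marginal_pos hf hw _)

lemma marginal_marginalRescale (ρ : β → ℝ) : marginal f (marginalRescale f w ρ) = ρ := by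
  funext b
  have hfibre : ∀ a ∈ univ.filter (fun a => f a = b),
      marginalRescale f w ρ a = ρ b / marginal f w b * w a := fun a ha => by
    rw [marginalRescale, (mem_filter.1 ha).2]
    ring
  rw [marginal, sum_congr rfl hfibre, ← mul_sum, ← marginal,
    div_mul_cancel₀ _ (marginal_pos hf hw b).ne']

/-- Pythagorean identity: `log (P / w)` is constant on fibres, so only the marginal of `γ` enters. -/
lemma relEntropy_eq_relEntropy_marginalRescale_add [Fintype β] {ρ : β → ℝ}
    (hρ : ∀ b, 0 < ρ b) {γ : α → ℝ} (hγ : marginal f γ = ρ) :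
    relEntropy γ w = relEntropy γ (marginalRescale f w ρ) +
      relEntropy (marginalRescale f w ρ) w := by
  have hP := marginalRescale_pos hf hw hρ
  have hcross : ∀ η : α → ℝ, marginal f η = ρ →
      ∑ a, η a * log (marginalRescale f w ρ a / w a) =
        ∑ b, ρ b * log (ρ b / marginal f w b) := fun η hη => by
    simp only [marginalRescale_div hw]
    rw [sum_mul_comp_eq_sum_marginal_mul f η fun b => log (ρ b / marginal f w b), hη]
  rw [relEntropy_eq_add γ (fun a => (hP a).ne') (fun a => (hw a).ne'), hcross γ hγ,
    relEntropy_eq_add _ (fun a => (hP a).ne') (fun a => (hw a).ne'),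
    hcross _ (marginal_marginalRescale hf hw ρ)]
  simp [relEntropy]

section Projection

variable [Fintype β] {ρ : β → ℝ} (hρ : ∀ b, 0 < ρ b) {γ : α → ℝ} (hγ₀ : ∀ a, 0 ≤ γ a)
  (hγ : marginal f γ = ρ)
include hρ hγ₀ hγ

lemma relEntropy_marginalRescale_le :
    relEntropy (marginalRescale f w ρ) w ≤ relEntropy γ w := by
  rw [relEntropy_eq_relEntropy_marginalRescale_add hf hw hρ hγ]
  have := relEntropy_nonneg hγ₀ (marginalRescale_pos hf hw hρ)
    (sum_eq_sum_of_marginal_eq (hγ.trans (marginal_marginalRescale hf hw ρ).symm))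
  linarith

lemma eq_marginalRescale_of_relEntropy_le
    (hle : relEntropy γ w ≤ relEntropy (marginalRescale f w ρ) w) :
    γ = marginalRescale f w ρ := by
  rw [relEntropy_eq_relEntropy_marginalRescale_add hf hw hρ hγ] at hle
  have hP := marginalRescale_pos hf hw hρ
  have hsum := sum_eq_sum_of_marginal_eq (hγ.trans (marginal_marginalRescale hf hw ρ).symm)
  exact (relEntropy_eq_zero_iff hγ₀ hP hsum).1
    (le_antisymm (by linarith) (relEntropy_nonneg hγ₀ hP hsum))

end Projection

end Marginal

theorem bregman_projection_marginal_constraint_general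
    (M N : ℕ)
    (γbar : (Fin N → Fin M) → ℝ) (hγbar : ∀ j, 0 < γbar j)
    (ρ : Fin M → ℝ) (hρ : ∀ m, 0 < ρ m) (i : Fin N)
    (C : Set ((Fin N → Fin M) → ℝ))
    (hC : C = {γ | (∀ j, 0 ≤ γ j) ∧
      ∀ m : Fin M,
        ∑ j ∈ Finset.univ.filter (fun j : Fin N → Fin M => j i = m), γ j = ρ m})
    (KL : ((Fin N → Fin M) → ℝ) → ℝ)
    (hKL : KL = fun γ => ∑ j, γ j * Real.log (γ j / γbar j))
    (P : (Fin N → Fin M) → ℝ)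
    (hP : P = fun j => ρ (j i) * γbar j /
      ∑ k ∈ Finset.univ.filter (fun k : Fin N → Fin M => k i = j i), γbar k) :
    P ∈ C ∧ (∀ γ ∈ C, KL P ≤ KL γ) ∧ (∀ γ ∈ C, KL γ ≤ KL P → γ = P) := by
  subst hC hKL hP
  have hsurj : Function.Surjective fun j : Fin N → Fin M => j i := fun m => ⟨fun _ => m, rfl⟩
  refine ⟨⟨fun j => (marginalRescale_pos hsurj hγbar hρ j).le,
    congrFun (marginal_marginalRescale hsurj hγbar ρ)⟩, fun γ ⟨hγ₀, hγ⟩ => ?_,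
    fun γ ⟨hγ₀, hγ⟩ hle => ?_⟩
  · exact relEntropy_marginalRescale_le hsurj hγbar hρ hγ₀ (funext hγ)
  · exact eq_marginalRescale_of_relEntropy_le hsurj hγbar hρ hγ₀ (funext hγ) hle

/-- The explicit formula for the Kullback–Leibler projection of a positive
tensor `γbar` onto the set `C` of nonnegative tensors whose `i`-th marginal is `ρ`:
the tensor `P` defined by the marginal-rescaling formula belongs to `C` and is the
unique minimizer of `KL(·|γbar)` over `C`. -/
theorem bregman_projection_marginal_constraint
    (M N : ℕ) (hM : 1 ≤ M) (hN : 1 ≤ N)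
    (γbar : (Fin N → Fin M) → ℝ) (hγbar : ∀ j, 0 < γbar j)
    (ρ : Fin M → ℝ) (hρ : ∀ m, 0 < ρ m) (i : Fin N)
    (C : Set ((Fin N → Fin M) → ℝ))
    (hC : C = {γ | (∀ j, 0 ≤ γ j) ∧
      ∀ m : Fin M,
        ∑ j ∈ Finset.univ.filter (fun j : Fin N → Fin M => j i = m), γ j = ρ m})
    (KL : ((Fin N → Fin M) → ℝ) → ℝ)
    (hKL : KL = fun γ => ∑ j, γ j * Real.log (γ j / γbar j))
    (P : (Fin N → Fin M) → ℝ)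
    (hP : P = fun j => ρ (j i) * γbar j /
      ∑ k ∈ Finset.univ.filter (fun k : Fin N → Fin M => k i = j i), γbar k) :
    P ∈ C ∧ (∀ γ ∈ C, KL P ≤ KL γ) ∧ (∀ γ ∈ C, KL γ ≤ KL P → γ = P) :=
  bregman_projection_marginal_constraint_general M N γbar hγbar ρ hρ i C hC KL hKL P hP
end

section
/- Let d ≥ 1, N ≥ 2, let ρ be a rotation-invariant probability measure on ℝ^d, and let λ be the pushforward of ρ under the map x ↦ |x| (a probability measure on [0,∞)). Let c(x_1,...,x_N) = ∑_{1≤i<j≤N} 1/|x_i - x_j| be the Coulomb cost and define, for (r_1,...,r_N) ∈ (0,∞)^N, c̃(r_1,...,r_N) = inf{ c(x_1,...,x_N) : x_i ∈ ℝ^d, |x_i| = r_i for all i }. Then for every γ ∈ Π(ρ,...,ρ), the pushforward γ̃ of γ under the map (x_1,...,x_N) ↦ (|x_1|,...,|x_N|) belongs to Π(λ,...,λ) and ∫ c̃ dγ̃ ≤ ∫ c dγ. -/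
/-!
Every configuration `x` is admissible in the infimum defining `c̃ (|x₁|, …, |x_N|)`, so
`c̃ (|x₁|, …, |x_N|) ≤ c x` pointwise; integrating against `γ` bounds `∫ c̃ dγ̃`. The marginals of
`γ̃` are those of `γ` pushed forward by the norm, because coordinate projections commute with
taking norms coordinatewise.
-/

open MeasureTheory ENNReal

namespace MeasureTheory.Measure

variable {ι α β : Type*} [MeasurableSpace α] [MeasurableSpace β]

theorem map_eval_map_pi_comp {f : α → β} (hf : Measurable f) (γ : Measure (ι → α)) (i : ι) :
    (γ.map fun x i => f (x i)).map (fun r => r i) = (γ.map fun x => x i).map f := by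
  rw [map_map (measurable_pi_apply i) (by fun_prop), map_map hf (measurable_pi_apply i)]
  rfl

theorem lintegral_map_le_of_comp_le {X Y : Type*} [MeasurableSpace X] [MeasurableSpace Y]
    {φ : X → Y} {g : Y → ℝ≥0∞} {f : X → ℝ≥0∞} (hgf : ∀ x, g (φ x) ≤ f x) (μ : Measure X) :
    ∫⁻ y, g y ∂μ.map φ ≤ ∫⁻ x, f x ∂μ :=
  (lintegral_map_le g φ).trans (lintegral_mono hgf)

end MeasureTheory.Measure

theorem radial_component_of_plan_general
    (d N : ℕ)
    (ρ : Measure (EuclideanSpace ℝ (Fin d)))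
    (lam : Measure ℝ) (hlam : lam = Measure.map (fun x => ‖x‖) ρ)
    (c : (Fin N → EuclideanSpace ℝ (Fin d)) → ℝ≥0∞)
    (ctil : (Fin N → ℝ) → ℝ≥0∞)
    (hctil : ctil = fun r =>
      ⨅ (x : Fin N → EuclideanSpace ℝ (Fin d)) (_ : ∀ i, ‖x i‖ = r i), c x)
    (γ : Measure (Fin N → EuclideanSpace ℝ (Fin d))) [IsProbabilityMeasure γ]
    (hγ : ∀ i, Measure.map (fun x => x i) γ = ρ)
    (γtil : Measure (Fin N → ℝ))
    (hγtil : γtil = Measure.map (fun x (i : Fin N) => ‖x i‖) γ) :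
    IsProbabilityMeasure γtil ∧ (∀ i, Measure.map (fun r => r i) γtil = lam) ∧
      ∫⁻ r, ctil r ∂γtil ≤ ∫⁻ x, c x ∂γ := by
  subst hγtil hlam hctil
  refine ⟨Measure.isProbabilityMeasure_map
    (measurable_pi_lambda _ fun i => (measurable_pi_apply i).norm).aemeasurable, fun i => ?_, ?_⟩
  · rw [Measure.map_eval_map_pi_comp measurable_norm, hγ i]
  · refine Measure.lintegral_map_le_of_comp_le (fun x => ?_) γ
    exact iInf₂_le x fun _ => rfl

/-- For a rotation-invariant probability `ρ` on `ℝ^d`, `λ` its radial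
pushforward, `c` the Coulomb cost and `c̃` the reduced radial cost, any plan
`γ ∈ Π(ρ,…,ρ)` has radial pushforward `γ̃ ∈ Π(λ,…,λ)` with `∫ c̃ dγ̃ ≤ ∫ c dγ`. -/
theorem radial_component_of_plan
    (d N : ℕ) (hd : 1 ≤ d) (hN : 2 ≤ N)
    (ρ : Measure (EuclideanSpace ℝ (Fin d))) [IsProbabilityMeasure ρ]
    (hrot : ∀ R : EuclideanSpace ℝ (Fin d) ≃ₗᵢ[ℝ] EuclideanSpace ℝ (Fin d),
      Measure.map R ρ = ρ)
    (lam : Measure ℝ) (hlam : lam = Measure.map (fun x => ‖x‖) ρ)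
    (c : (Fin N → EuclideanSpace ℝ (Fin d)) → ℝ≥0∞)
    (hc : c = fun x =>
      ∑ p ∈ Finset.univ.filter (fun p : Fin N × Fin N => p.1 < p.2),
        (edist (x p.1) (x p.2))⁻¹)
    (ctil : (Fin N → ℝ) → ℝ≥0∞)
    (hctil : ctil = fun r =>
      ⨅ (x : Fin N → EuclideanSpace ℝ (Fin d)) (_ : ∀ i, ‖x i‖ = r i), c x)
    (γ : Measure (Fin N → EuclideanSpace ℝ (Fin d))) [IsProbabilityMeasure γ]
    (hγ : ∀ i, Measure.map (fun x => x i) γ = ρ)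
    (γtil : Measure (Fin N → ℝ))
    (hγtil : γtil = Measure.map (fun x (i : Fin N) => ‖x i‖) γ) :
    IsProbabilityMeasure γtil ∧ (∀ i, Measure.map (fun r => r i) γtil = lam) ∧
      ∫⁻ r, ctil r ∂γtil ≤ ∫⁻ x, c x ∂γ :=
  radial_component_of_plan_general d N ρ lam hlam c ctil hctil γ hγ γtil hγtil
end

section
/- Let a > 0 and let μ be the uniform probability measure on the interval [-a/2, a/2] ⊂ ℝ. Define f : [-a/2, a/2] → ℝ by f(x) = x + a/2 if x < 0 and f(x) = x - a/2 if x ≥ 0. Then f pushes μ forward to μ, and the plan γ = (id, f)_# μ is optimal for the two-marginal Kantorovich problem with Coulomb cost: ∫ 1/|x - f(x)| dμ(x) = inf_{γ ∈ Π(μ,μ)} ∫ 1/|x - y| dγ(x,y). -/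
/-!
Since the two marginals of a plan `γ ∈ Π(μ, μ)` have first absolute moment `a/4`, the triangle
inequality through `0` gives `∫ |x - y| dγ ≤ a/2`, and Jensen's inequality for the convex
function `s ↦ 1/s` gives `∫ 1/|x - y| dγ ≥ 2/a`. The map `f` moves every point by exactly
`a/2` (it is the half-turn of the circle `[-a/2, a/2)`), so it preserves `μ` and its plan
attains this bound.
-/

open MeasureTheory ENNReal Set
open scoped Interval

theorem ENNReal.two_mul_le_inv_add_sq_mul {r : ℝ≥0∞} (hr : r ≠ ∞) (s : ℝ≥0∞) :
    2 * r ≤ s⁻¹ + r ^ 2 * s := by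
  rcases eq_or_ne s 0 with rfl | hs0
  · simp
  rcases eq_or_ne s ∞ with rfl | hs
  · by_cases hr0 : r = 0 <;> simp [hr0]
  lift r to NNReal using hr
  lift s to NNReal using hs
  have hs0' : (0 : ℝ) < s := by simpa [pos_iff_ne_zero] using hs0
  rw [← ENNReal.coe_inv (by simpa using hs0)]
  norm_cast
  rw [← NNReal.coe_le_coe]
  push_cast
  have hsquare : (s : ℝ)⁻¹ + r ^ 2 * s - 2 * r = (s : ℝ)⁻¹ * (r * s - 1) ^ 2 := by
    field_simp
    ring
  linarith [mul_nonneg (inv_nonneg.2 hs0'.le) (sq_nonneg ((r : ℝ) * s - 1))]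

theorem ENNReal.inv_lintegral_le_lintegral_inv {α : Type*} [MeasurableSpace α] {μ : Measure α}
    [IsProbabilityMeasure μ] {g : α → ℝ≥0∞} (hg : AEMeasurable g μ) :
    (∫⁻ x, g x ∂μ)⁻¹ ≤ ∫⁻ x, (g x)⁻¹ ∂μ := by
  set m := ∫⁻ x, g x ∂μ
  rcases eq_or_ne m 0 with hm0 | hm0
  · have hinv : ∀ᵐ x ∂μ, (g x)⁻¹ = ∞ := by
      filter_upwards [(lintegral_eq_zero_iff' hg).1 hm0] with x hx
      simp [hx]
    simp [lintegral_congr_ae hinv]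
  rcases eq_or_ne m ∞ with hm | hm
  · simp [hm]
  have hr : m⁻¹ ≠ ∞ := inv_ne_top.2 hm0
  -- `s ↦ s⁻¹` lies above its tangent line at `m`
  have htangent : 2 * m⁻¹ ≤ ∫⁻ x, (g x)⁻¹ ∂μ + m⁻¹ := by
    calc 2 * m⁻¹ = ∫⁻ _, 2 * m⁻¹ ∂μ := by simp
      _ ≤ ∫⁻ x, ((g x)⁻¹ + m⁻¹ ^ 2 * g x) ∂μ :=
        lintegral_mono fun x => two_mul_le_inv_add_sq_mul hr (g x)
      _ = ∫⁻ x, (g x)⁻¹ ∂μ + m⁻¹ := by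
        rw [lintegral_add_right' _ (hg.const_mul _), lintegral_const_mul' _ _ (by simpa using hr),
          sq, mul_assoc, ENNReal.inv_mul_cancel hm0 hm, mul_one]
  rwa [two_mul, ENNReal.add_le_add_iff_right hr] at htangent

theorem lintegral_edist_le_of_map_fst_of_map_snd {X : Type*} [PseudoEMetricSpace X]
    [MeasurableSpace X] [OpensMeasurableSpace X] {μ ν : Measure X} {γ : Measure (X × X)}
    (h₁ : γ.map Prod.fst = μ) (h₂ : γ.map Prod.snd = ν) (x₀ : X) :
    ∫⁻ p, edist p.1 p.2 ∂γ ≤ ∫⁻ x, edist x x₀ ∂μ + ∫⁻ y, edist y x₀ ∂ν := by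
  calc ∫⁻ p, edist p.1 p.2 ∂γ ≤ ∫⁻ p, (edist p.1 x₀ + edist p.2 x₀) ∂γ :=
        lintegral_mono fun p => edist_triangle_right _ _ _
    _ = ∫⁻ x, edist x x₀ ∂μ + ∫⁻ y, edist y x₀ ∂ν := by
        rw [lintegral_add_left (by fun_prop), ← h₁, ← h₂,
          lintegral_map (by fun_prop) measurable_fst, lintegral_map (by fun_prop) measurable_snd]

theorem iInf_lintegral_coupling_le_lintegral_graph {X Y : Type*} [MeasurableSpace X]
    [MeasurableSpace Y] (μ : Measure X) [IsProbabilityMeasure μ] {ν : Measure Y} {T : X → Y}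
    (hT : Measurable T) (hTμ : μ.map T = ν) {c : X × Y → ℝ≥0∞} (hc : Measurable c) :
    ⨅ (γ : Measure (X × Y)) (_ : IsProbabilityMeasure γ) (_ : γ.map Prod.fst = μ)
        (_ : γ.map Prod.snd = ν), ∫⁻ p, c p ∂γ ≤ ∫⁻ x, c (x, T x) ∂μ := by
  have hgraph : Measurable fun x => (x, T x) := measurable_id.prodMk hT
  refine iInf_le_of_le (μ.map fun x => (x, T x)) <|
    iInf_le_of_le (Measure.isProbabilityMeasure_map hgraph.aemeasurable) <|
    iInf_le_of_le ?_ <| iInf_le_of_le ((Measure.snd_map_prodMk measurable_id).trans hTμ) ?_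
  · exact (Measure.fst_map_prodMk hT).trans Measure.map_id
  · exact (lintegral_map hc hgraph).le

theorem lintegral_enorm_uIoc_zero (b : ℝ) : ∫⁻ x in Ι 0 b, ‖x‖ₑ = ENNReal.ofReal (b ^ 2 / 2) := by
  simp_rw [Real.enorm_eq_ofReal_abs]
  rw [← ofReal_integral_eq_lintegral_ofReal continuous_abs.integrableOn_uIoc
    (Filter.Eventually.of_forall fun x => abs_nonneg x)]
  have := integral_pow_abs_sub_uIoc (a := 0) (b := b) 1
  norm_num at this
  rw [this]

theorem lintegral_enorm_Icc_neg_self {c : ℝ} (hc : 0 ≤ c) :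
    ∫⁻ x in Icc (-c) c, ‖x‖ₑ = ENNReal.ofReal (c ^ 2) := by
  have hsplit : Ioc (-c) c = Ι 0 (-c) ∪ Ι 0 c := by
    rw [uIoc_of_ge (by linarith), uIoc_of_le hc, Ioc_union_Ioc_eq_Ioc (by linarith) hc]
  rw [← restrict_Ioc_eq_restrict_Icc, hsplit, lintegral_union measurableSet_uIoc ?_,
    lintegral_enorm_uIoc_zero, lintegral_enorm_uIoc_zero, ← ENNReal.ofReal_add (by positivity)
    (by positivity)]
  · ring_nf
  · rw [uIoc_of_ge (by linarith), uIoc_of_le hc]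
    exact Ioc_disjoint_Ioc_of_le le_rfl

theorem map_add_const_restrict_Ico (b e c : ℝ) :
    (volume.restrict (Ico b e)).map (· + c) = volume.restrict (Ico (b + c) (e + c)) := by
  simpa using ((measurePreserving_add_right volume c).restrict_preimage
    (measurableSet_Ico (a := b + c) (b := e + c))).map_eq

noncomputable def halfTurn (c x : ℝ) : ℝ := if x < 0 then x + c else x - c

theorem measurable_halfTurn (c : ℝ) : Measurable (halfTurn c) :=
  (measurable_add_const c).ite measurableSet_Iio (measurable_sub_const c)

theorem edist_halfTurn {c : ℝ} (hc : 0 ≤ c) (x : ℝ) :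
    edist x (halfTurn c x) = ENNReal.ofReal c := by
  rw [edist_dist, Real.dist_eq, halfTurn]
  split_ifs <;> simp [abs_of_nonneg hc]

theorem map_halfTurn_restrict_Icc {c : ℝ} (hc : 0 ≤ c) :
    (volume.restrict (Icc (-c) c)).map (halfTurn c) = volume.restrict (Icc (-c) c) := by
  have hsplit : volume.restrict (Icc (-c) c) =
      volume.restrict (Ico (-c) 0) + volume.restrict (Ico 0 c) := by
    rw [← restrict_Ico_eq_restrict_Icc, ← Ico_union_Ico_eq_Ico (by linarith) hc,
      Measure.restrict_union Ico_disjoint_Ico_same measurableSet_Ico]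
  have hleft : halfTurn c =ᵐ[volume.restrict (Ico (-c) 0)] (· + c) :=
    ae_restrict_of_forall_mem measurableSet_Ico fun x hx => if_pos hx.2
  have hright : halfTurn c =ᵐ[volume.restrict (Ico 0 c)] (· + -c) :=
    ae_restrict_of_forall_mem measurableSet_Ico fun x hx => by
      simp [halfTurn, not_lt.2 hx.1, sub_eq_add_neg]
  rw [hsplit, Measure.map_add _ _ (measurable_halfTurn c), Measure.map_congr hleft,
    Measure.map_congr hright, map_add_const_restrict_Ico, map_add_const_restrict_Ico, add_comm]
  simp

theorem isProbabilityMeasure_uniform_Icc {a : ℝ} (ha : 0 < a) :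
    IsProbabilityMeasure ((ENNReal.ofReal a)⁻¹ • volume.restrict (Icc (-(a / 2)) (a / 2))) := by
  constructor
  rw [Measure.smul_apply, Measure.restrict_apply_univ, Real.volume_Icc, smul_eq_mul,
    show a / 2 - -(a / 2) = a by ring, ENNReal.inv_mul_cancel (by simpa using ha) ofReal_ne_top]

theorem lintegral_edist_zero_uniform_Icc {a : ℝ} (ha : 0 < a) :
    ∫⁻ x, edist x 0 ∂((ENNReal.ofReal a)⁻¹ • volume.restrict (Icc (-(a / 2)) (a / 2))) =
      ENNReal.ofReal (a / 4) := by
  simp_rw [edist_zero_right]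
  rw [lintegral_smul_measure, lintegral_enorm_Icc_neg_self (by positivity), smul_eq_mul,
    ← ENNReal.ofReal_inv_of_pos ha, ← ENNReal.ofReal_mul (by positivity)]
  congr 1
  field_simp
  ring

/-- For the uniform probability measure `μ` on `[-a/2, a/2]`, the map
`f(x) = x + a/2` for `x < 0` and `f(x) = x - a/2` for `x ≥ 0` pushes `μ` forward to
itself and the plan `(id,f)_#μ` is optimal for the two-marginal Kantorovich problem
with Coulomb cost. -/
theorem uniform_1d_comotion_optimal
    (a : ℝ) (ha : 0 < a)
    (μ : Measure ℝ)
    (hμ : μ = (ENNReal.ofReal a)⁻¹ • volume.restrict (Set.Icc (-(a / 2)) (a / 2)))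
    (f : ℝ → ℝ)
    (hf : f = fun x => if x < 0 then x + a / 2 else x - a / 2) :
    Measure.map f μ = μ ∧
    ∫⁻ x, (edist x (f x))⁻¹ ∂μ =
      ⨅ (γ : Measure (ℝ × ℝ))
        (_ : IsProbabilityMeasure γ)
        (_ : Measure.map Prod.fst γ = μ)
        (_ : Measure.map Prod.snd γ = μ),
        ∫⁻ p, (edist p.1 p.2)⁻¹ ∂γ := by
  have hf : f = halfTurn (a / 2) := hf
  have hc : 0 ≤ a / 2 := by positivity
  have hprob : IsProbabilityMeasure μ := hμ ▸ isProbabilityMeasure_uniform_Icc ha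
  have hmap : μ.map f = μ := by
    rw [hμ, hf, Measure.map_smul, map_halfTurn_restrict_Icc hc]
  have hcost : ∫⁻ x, (edist x (f x))⁻¹ ∂μ = (ENNReal.ofReal (a / 2))⁻¹ := by
    simp [hf, edist_halfTurn hc]
  refine ⟨hmap, le_antisymm ?_ ?_⟩
  · refine le_iInf fun γ => le_iInf fun _ => le_iInf fun h₁ => le_iInf fun h₂ => ?_
    have hmean : ∫⁻ p, edist p.1 p.2 ∂γ ≤ ENNReal.ofReal (a / 2) := by
      have := lintegral_edist_le_of_map_fst_of_map_snd h₁ h₂ 0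
      rwa [hμ, lintegral_edist_zero_uniform_Icc ha, ← ENNReal.ofReal_add (by positivity)
        (by positivity), show a / 4 + a / 4 = a / 2 by ring] at this
    calc ∫⁻ x, (edist x (f x))⁻¹ ∂μ = (ENNReal.ofReal (a / 2))⁻¹ := hcost
      _ ≤ (∫⁻ p, edist p.1 p.2 ∂γ)⁻¹ := ENNReal.inv_le_inv.2 hmean
      _ ≤ ∫⁻ p, (edist p.1 p.2)⁻¹ ∂γ := ENNReal.inv_lintegral_le_lintegral_inv (by fun_prop)
  · exact iInf_lintegral_coupling_le_lintegral_graph μ (hf ▸ measurable_halfTurn _) hmap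
      measurable_edist.inv
end

section
/- Let a > 0 and let μ be the probability measure on [-a, a] ⊂ ℝ with density ρ(x) = (a - |x|)/a². Define f : [-a,a] \ {0} → ℝ by f(x) = (x/|x|)(√(2a|x| - x²) - a). Then f pushes μ forward to μ, and the plan γ = (id, f)_# μ is optimal for the two-marginal Kantorovich problem with Coulomb cost: ∫ 1/|x - f(x)| dμ(x) = inf_{γ ∈ Π(μ,μ)} ∫ 1/|x - y| dγ(x,y). -/
open MeasureTheory ENNReal

/-!
With `q(r) = a - √(2ar - r²)` one has `|f x| = q(|x|)` and `f` flips signs. Since `q` is a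
decreasing involution of `[0, a]`, `f` is an involution of `(-a, a) \ {0}`; it solves the Jacobian
equation `ρ(f x) |f'(x)| = ρ(x)` and therefore preserves `μ`.

Optimality is certified by the Kantorovich potential `u(x) = U(|x|)` with
`U' = -1 / (r + q(r))²`, where `r + q(r) = |x - f x|`: one gets `u(x) + u(f x) = 1 / |x - f x|`,
while `u(x) + u(y) ≤ 1 / (|x| + |y|) ≤ 1 / |x - y|` everywhere on `[-a, a]`.
-/

open Set

section Optimality

variable {α : Type*} [MeasurableSpace α]

lemma ofReal_integral_le_lintegral_ofReal {μ : Measure α} {f : α → ℝ} (hf : Integrable f μ) :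
    ENNReal.ofReal (∫ x, f x ∂μ) ≤ ∫⁻ x, ENNReal.ofReal (f x) ∂μ := by
  rw [integral_eq_lintegral_pos_part_sub_lintegral_neg_part hf]
  exact (ENNReal.ofReal_le_ofReal (sub_le_self _ toReal_nonneg)).trans ofReal_toReal_le

lemma MeasureTheory.MeasurePreserving.integral_comp_of_aestronglyMeasurable {β : Type*}
    [MeasurableSpace β] {ν : Measure β} {μ : Measure α} {φ : β → α} (hφ : MeasurePreserving φ ν μ)
    {u : α → ℝ} (hu : AEStronglyMeasurable u μ) : ∫ y, u (φ y) ∂ν = ∫ x, u x ∂μ := by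
  rw [← integral_map hφ.measurable.aemeasurable (hφ.map_eq ▸ hu), hφ.map_eq]

/-- Weak duality: every plan `γ` costs at least `∫ (u ⊕ u) dγ = 2 ∫ u dμ`, which the plan
`(id, T)_# μ` attains. -/
theorem lintegral_eq_iInf_of_potential {μ : Measure α} [IsProbabilityMeasure μ]
    {c : α → α → ℝ≥0∞} (hc : Measurable fun p : α × α => c p.1 p.2)
    {T : α → α} (hT : MeasurePreserving T μ μ) {u : α → ℝ} (hu : Integrable u μ)
    {s : Set α} (hs : ∀ᵐ x ∂μ, x ∈ s)
    (hle : ∀ x ∈ s, ∀ y ∈ s, ENNReal.ofReal (u x + u y) ≤ c x y)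
    (heq : ∀ᵐ x ∂μ, c x (T x) = ENNReal.ofReal (u x + u (T x)))
    (hnn : ∀ᵐ x ∂μ, 0 ≤ u x + u (T x)) :
    ∫⁻ x, c x (T x) ∂μ = ⨅ (γ : Measure (α × α)) (_ : IsProbabilityMeasure γ)
        (_ : γ.map Prod.fst = μ) (_ : γ.map Prod.snd = μ), ∫⁻ p, c p.1 p.2 ∂γ := by
  have hvalue : ∫⁻ x, c x (T x) ∂μ = ENNReal.ofReal (∫ x, u x ∂μ + ∫ x, u x ∂μ) := by
    have huT : Integrable (fun x => u (T x)) μ := (hT.integrable_comp hu.1).2 hu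
    rw [lintegral_congr_ae heq,
      ← ofReal_integral_eq_lintegral_ofReal (f := fun x => u x + u (T x)) (hu.add huT) hnn,
      integral_add hu huT, hT.integral_comp_of_aestronglyMeasurable hu.1]
  refine le_antisymm (le_iInf₂ fun γ _ => le_iInf₂ fun hfst hsnd => ?_) ?_
  · have hfst' : MeasurePreserving Prod.fst γ μ := ⟨measurable_fst, hfst⟩
    have hsnd' : MeasurePreserving Prod.snd γ μ := ⟨measurable_snd, hsnd⟩
    have hu₁ : Integrable (fun p : α × α => u p.1) γ := (hfst'.integrable_comp hu.1).2 hu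
    have hu₂ : Integrable (fun p : α × α => u p.2) γ := (hsnd'.integrable_comp hu.1).2 hu
    have hs₁ : ∀ᵐ p ∂γ, p.1 ∈ s := ae_of_ae_map measurable_fst.aemeasurable (hfst ▸ hs)
    have hs₂ : ∀ᵐ p ∂γ, p.2 ∈ s := ae_of_ae_map measurable_snd.aemeasurable (hsnd ▸ hs)
    calc ∫⁻ x, c x (T x) ∂μ = ENNReal.ofReal (∫ p, (u p.1 + u p.2) ∂γ) := by
          rw [hvalue, integral_add hu₁ hu₂, hfst'.integral_comp_of_aestronglyMeasurable hu.1,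
            hsnd'.integral_comp_of_aestronglyMeasurable hu.1]
      _ ≤ ∫⁻ p, ENNReal.ofReal (u p.1 + u p.2) ∂γ :=
          ofReal_integral_le_lintegral_ofReal (hu₁.add hu₂)
      _ ≤ ∫⁻ p, c p.1 p.2 ∂γ := lintegral_mono_ae <| by
          filter_upwards [hs₁, hs₂] with p h₁ h₂ using hle _ h₁ _ h₂
  · have hgraph : Measurable fun x => (x, T x) := measurable_id.prodMk hT.measurable
    have hprob := Measure.isProbabilityMeasure_map (μ := μ) hgraph.aemeasurable
    have hfst : (μ.map fun x => (x, T x)).map Prod.fst = μ := by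
      rw [Measure.map_map measurable_fst hgraph]; exact Measure.map_id
    have hsnd : (μ.map fun x => (x, T x)).map Prod.snd = μ := by
      rw [Measure.map_map measurable_snd hgraph]; exact hT.map_eq
    refine (iInf₂_le _ hprob).trans ((iInf₂_le hfst hsnd).trans_eq ?_)
    exact lintegral_map hc hgraph

end Optimality

theorem map_withDensity_eq_self_of_jacobian {ρ : ℝ → ℝ≥0∞} {T T' : ℝ → ℝ} {s : Set ℝ}
    (hs : MeasurableSet s) (hρs : ∀ᵐ x ∂volume.withDensity ρ, x ∈ s) (hT : Measurable T)
    (hT' : ∀ x ∈ s, HasDerivWithinAt T (T' x) s x) (hbij : BijOn T s s)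
    (hjac : ∀ x ∈ s, ENNReal.ofReal |T' x| * ρ (T x) = ρ x) :
    (volume.withDensity ρ).map T = volume.withDensity ρ := by
  ext B hB
  have hconull : volume.withDensity ρ sᶜ = 0 := ae_iff.1 hρs
  have hsub : T ⁻¹' B ∩ s ⊆ s := inter_subset_right
  have hmeas : MeasurableSet (T ⁻¹' B ∩ s) := (hT hB).inter hs
  have himage : B ∩ s = T '' (T ⁻¹' B ∩ s) := by rw [image_preimage_inter, hbij.image_eq]
  rw [Measure.map_apply hT hB, ← measure_inter_conull hconull, withDensity_apply _ hmeas,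
    ← measure_inter_conull (s := B) hconull, withDensity_apply _ (hB.inter hs), himage,
    lintegral_image_eq_lintegral_abs_deriv_mul hmeas (fun x hx => (hT' x hx.2).mono hsub)
      (hbij.injOn.mono hsub)]
  exact setLIntegral_congr_fun hmeas fun x hx => (hjac x hx.2).symm

theorem isMinOn_of_hasDerivAt_nonpos_nonneg {G G' : ℝ → ℝ} {l m r : ℝ} (hlm : l ≤ m)
    (hmr : m ≤ r) (hG : ∀ z ∈ Icc l r, HasDerivAt G (G' z) z)
    (hleft : ∀ z ∈ Ioo l m, G' z ≤ 0) (hright : ∀ z ∈ Ioo m r, 0 ≤ G' z) :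
    IsMinOn G (Icc l r) m := by
  have hcont : ContinuousOn G (Icc l r) := fun z hz => (hG z hz).continuousAt.continuousWithinAt
  intro z hz
  rcases le_total z m with hzm | hmz
  · refine antitoneOn_of_hasDerivWithinAt_nonpos (f' := G') (convex_Icc l m)
      (hcont.mono (Icc_subset_Icc_right hmr)) (fun x hx => ?_) (fun x hx => ?_)
      ⟨hz.1, hzm⟩ ⟨hlm, le_rfl⟩ hzm
    all_goals rw [interior_Icc] at hx
    · exact (hG x ⟨hx.1.le, hx.2.le.trans hmr⟩).hasDerivWithinAt
    · exact hleft x hx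
  · refine monotoneOn_of_hasDerivWithinAt_nonneg (f' := G') (convex_Icc m r)
      (hcont.mono (Icc_subset_Icc_left hlm)) (fun x hx => ?_) (fun x hx => ?_)
      ⟨le_rfl, hmr⟩ ⟨hmz, hz.2⟩ hmz
    all_goals rw [interior_Icc] at hx
    · exact (hG x ⟨hlm.trans hx.1.le, hx.2.le⟩).hasDerivWithinAt
    · exact hright x hx

lemma inv_edist_eq_ofReal_inv_abs {x y : ℝ} (h : x ≠ y) :
    (edist x y)⁻¹ = ENNReal.ofReal |x - y|⁻¹ := by
  rw [edist_dist, Real.dist_eq, ENNReal.ofReal_inv_of_pos (abs_pos.2 (sub_ne_zero.2 h))]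

section Partner

variable {a r t : ℝ}

noncomputable def tentPartner (a r : ℝ) : ℝ := a - √(2 * a * r - r ^ 2)

noncomputable def tentGap (a r : ℝ) : ℝ := r + tentPartner a r

lemma continuous_tentPartner : Continuous (tentPartner a) := by
  unfold tentPartner; fun_prop

lemma continuous_tentGap : Continuous (tentGap a) := by
  unfold tentGap; exact continuous_id.add continuous_tentPartner

lemma tentPartner_nonneg (ha : 0 ≤ a) : 0 ≤ tentPartner a r :=
  sub_nonneg.2 (Real.sqrt_le_iff.2 ⟨ha, by nlinarith [sq_nonneg (r - a)]⟩)

lemma tentPartner_le : tentPartner a r ≤ a := sub_le_self _ (Real.sqrt_nonneg _)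

lemma tentPartner_mem_Ioo (hr : r ∈ Ioo 0 a) : tentPartner a r ∈ Ioo 0 a := by
  obtain ⟨hr0, hra⟩ := hr
  constructor
  · exact sub_pos.2 ((Real.sqrt_lt' (hr0.trans hra)).2 (by nlinarith))
  · exact sub_lt_self _ (Real.sqrt_pos.2 (by nlinarith))

lemma tentPartner_self (ha : 0 ≤ a) : tentPartner a a = 0 := by
  rw [tentPartner, show 2 * a * a - a ^ 2 = a ^ 2 by ring, Real.sqrt_sq ha, sub_self]

/-- Over `[0, a]` the graph of `tentPartner a` is the quarter circle `(a - r)² + (a - t)² = a²`,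
which is symmetric in `r` and `t`. -/
lemma tentPartner_tentPartner (hr : r ∈ Icc 0 a) : tentPartner a (tentPartner a r) = r := by
  obtain ⟨hr0, hra⟩ := hr
  have hsq : √(2 * a * r - r ^ 2) ^ 2 = 2 * a * r - r ^ 2 := Real.sq_sqrt (by nlinarith)
  rw [tentPartner, tentPartner,
    show 2 * a * (a - √(2 * a * r - r ^ 2)) - (a - √(2 * a * r - r ^ 2)) ^ 2 = (a - r) ^ 2 by
      linear_combination -hsq,
    Real.sqrt_sq (sub_nonneg.2 hra)]
  ring

lemma tentPartner_antitoneOn : AntitoneOn (tentPartner a) (Icc 0 a) := by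
  intro r hr t ht hrt
  exact sub_le_sub_left (Real.sqrt_le_sqrt (by nlinarith [hr.1, ht.2])) a

lemma hasDerivAt_tentPartner (hr : 0 < 2 * a * r - r ^ 2) :
    HasDerivAt (tentPartner a) (-(a - r) / √(2 * a * r - r ^ 2)) r := by
  have hpoly : HasDerivAt (fun r => 2 * a * r - r ^ 2) (2 * a - 2 * r) r := by
    simpa using ((hasDerivAt_id r).const_mul (2 * a)).fun_sub (hasDerivAt_pow 2 r)
  refine ((hpoly.sqrt hr.ne').const_sub a).congr_deriv ?_
  field_simp

lemma tentGap_pos (ha : 0 < a) (hr : -a < r) : 0 < tentGap a r := by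
  have : √(2 * a * r - r ^ 2) < a + r := (Real.sqrt_lt' (by linarith)).2 (by nlinarith)
  unfold tentGap tentPartner; linarith

lemma tentGap_tentPartner (hr : r ∈ Icc 0 a) : tentGap a (tentPartner a r) = tentGap a r := by
  rw [tentGap, tentGap, tentPartner_tentPartner hr, add_comm]

end Partner

section Potential

variable {a r t : ℝ}

/-- The constant is fixed by `tentPotential a a + tentPotential a 0 = 1 / a`, the cost of the pair
`(a, 0)` on the graph of the optimal map. -/
noncomputable def tentPotential (a r : ℝ) : ℝ :=
  (a⁻¹ + ∫ t in (0 : ℝ)..a, (tentGap a t ^ 2)⁻¹) / 2 - ∫ t in (0 : ℝ)..r, (tentGap a t ^ 2)⁻¹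

lemma continuousOn_inv_tentGap_sq (ha : 0 < a) :
    ContinuousOn (fun t => (tentGap a t ^ 2)⁻¹) (Ioi (-a)) :=
  (continuous_tentGap.pow 2).continuousOn.inv₀ fun _ ht => pow_ne_zero 2 (tentGap_pos ha ht).ne'

lemma hasDerivAt_tentPotential (ha : 0 < a) (hr : -a < r) :
    HasDerivAt (tentPotential a) (-(tentGap a r ^ 2)⁻¹) r := by
  have hcont := continuousOn_inv_tentGap_sq ha
  have hsub : uIcc 0 r ⊆ Ioi (-a) := ordConnected_Ioi.uIcc_subset (neg_lt_zero.2 ha) hr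
  exact (intervalIntegral.integral_hasDerivAt_right (hcont.mono hsub).intervalIntegrable
    (hcont.stronglyMeasurableAtFilter isOpen_Ioi r hr)
    (hcont.continuousAt (isOpen_Ioi.mem_nhds hr))).const_sub _

lemma continuousOn_tentPotential (ha : 0 < a) : ContinuousOn (tentPotential a) (Ioi (-a)) :=
  fun _ hr => (hasDerivAt_tentPotential ha hr).continuousAt.continuousWithinAt

/-- The potential is tight along the graph `t = tentPartner a r`: both sides agree at `r = a`,
and their derivatives agree because `tentGap` is invariant under `r ↦ tentPartner a r`. -/
lemma tentPotential_add_tentPartner (ha : 0 < a) (hr : r ∈ Icc 0 a) :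
    tentPotential a r + tentPotential a (tentPartner a r) = (tentGap a r)⁻¹ := by
  set E := fun z => tentPotential a z + tentPotential a (tentPartner a z) - (tentGap a z)⁻¹
  have hEa : E a = 0 := by
    simp only [E, tentPartner_self ha.le, tentGap, add_zero, tentPotential,
      intervalIntegral.integral_same]
    ring
  suffices E r = E a by simp only [E] at this hEa; linarith
  rcases hr.2.eq_or_lt with rfl | hra
  · rfl
  have hq_mem : ∀ z, -a < tentPartner a z := fun z =>
    (neg_lt_zero.2 ha).trans_le (tentPartner_nonneg ha.le)
  have hgap : ∀ z ∈ Icc r a, tentGap a z ≠ 0 := fun z hz =>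
    (tentGap_pos ha (by linarith [hr.1, hz.1])).ne'
  have hcont : ContinuousOn E (Icc r a) := by
    refine (((continuousOn_tentPotential ha).mono fun z hz => ?_).add
      ((continuousOn_tentPotential ha).comp continuous_tentPartner.continuousOn
        fun z _ => hq_mem z)).sub (continuous_tentGap.continuousOn.inv₀ hgap)
    exact show -a < z by linarith [hr.1, hz.1]
  have hderiv : ∀ z ∈ Ioo r a, HasDerivAt E 0 z := by
    intro z ⟨hrz, hza⟩
    have hz0 : 0 < z := hr.1.trans_lt hrz
    have hq := hasDerivAt_tentPartner (a := a) (r := z) (by nlinarith)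
    have hU := hasDerivAt_tentPotential ha (by linarith : -a < z)
    have hUq := (hasDerivAt_tentPotential ha (hq_mem z)).comp z hq
    have hgap' : HasDerivAt (tentGap a) (1 + -(a - z) / √(2 * a * z - z ^ 2)) z :=
      (hasDerivAt_id' z).add hq
    refine ((hU.add hUq).sub (hgap'.inv (hgap z ⟨hrz.le, hza.le⟩))).congr_deriv ?_
    rw [tentGap_tentPartner ⟨hz0.le, hza.le⟩]
    field_simp
    ring
  obtain ⟨_, _, hslope⟩ := exists_hasDerivAt_eq_slope E (fun _ => 0) hra hcont hderiv
  rw [eq_comm, _root_.div_eq_zero_iff, sub_eq_zero] at hslope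
  exact (hslope.resolve_right (sub_ne_zero.2 hra.ne')).symm

/-- For fixed `r`, `t ↦ 1 / (r + t) - tentPotential a t` decreases up to `t = tentPartner a r`
and increases afterwards, and its value there is `tentPotential a r`. -/
lemma tentPotential_add_le (ha : 0 < a) (hr : r ∈ Icc 0 a) (ht : t ∈ Icc 0 a) (hrt : 0 < r + t) :
    tentPotential a r + tentPotential a t ≤ (r + t)⁻¹ := by
  wlog hr0 : 0 < r generalizing r t
  · simpa only [add_comm] using this ht hr (by linarith) (by linarith [hr.1])
  set m := tentPartner a r
  have hm : m ∈ Icc 0 a := ⟨tentPartner_nonneg ha.le, tentPartner_le⟩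
  have hqm : tentPartner a m = r := tentPartner_tentPartner hr
  set G := fun z => (r + z)⁻¹ - tentPotential a z
  have hG : ∀ z ∈ Icc 0 a, HasDerivAt G (-((r + z) ^ 2)⁻¹ + (tentGap a z ^ 2)⁻¹) z := by
    intro z hz
    refine ((((hasDerivAt_id' z).const_add r).inv (by linarith [hz.1])).sub
      (hasDerivAt_tentPotential ha (by linarith [hz.1]))).congr_deriv ?_
    ring
  have hmin : IsMinOn G (Icc 0 a) m := by
    refine isMinOn_of_hasDerivAt_nonpos_nonneg hm.1 hm.2 hG (fun z hz => ?_) (fun z hz => ?_)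
    · have hz' : z ∈ Icc 0 a := ⟨hz.1.le, hz.2.le.trans hm.2⟩
      have : r ≤ tentPartner a z := hqm ▸ tentPartner_antitoneOn hz' hm hz.2.le
      have hle : r + z ≤ tentGap a z := by rw [tentGap]; linarith
      have := inv_anti₀ (by nlinarith [hz.1]) (pow_le_pow_left₀ (by linarith [hz.1]) hle 2)
      linarith
    · have hz' : z ∈ Icc 0 a := ⟨hm.1.trans hz.1.le, hz.2.le⟩
      have : tentPartner a z ≤ r := hqm ▸ tentPartner_antitoneOn hm hz' hz.1.le
      have hle : tentGap a z ≤ r + z := by rw [tentGap]; linarith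
      have hgap := tentGap_pos ha (by linarith [hz'.1] : -a < z)
      have := inv_anti₀ (pow_pos hgap 2) (pow_le_pow_left₀ hgap.le hle 2)
      linarith
  have hGm : G m = tentPotential a r := by
    simp only [G, m]
    rw [← tentGap, ← tentPotential_add_tentPartner ha hr]
    ring
  have := hmin ht
  simp only [mem_ofPred_eq, hGm, G] at this
  linarith

lemma tentPotential_abs_add_le (ha : 0 < a) {x y : ℝ} (hx : x ∈ Icc (-a) a)
    (hy : y ∈ Icc (-a) a) (hxy : x ≠ y) :
    tentPotential a |x| + tentPotential a |y| ≤ |x - y|⁻¹ := by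
  have hpos : 0 < |x - y| := abs_pos.2 (sub_ne_zero.2 hxy)
  exact (tentPotential_add_le ha ⟨abs_nonneg x, abs_le.2 hx⟩ ⟨abs_nonneg y, abs_le.2 hy⟩
    (hpos.trans_le (abs_sub x y))).trans (inv_anti₀ hpos (abs_sub x y))

end Potential

section TentMap

variable {a x : ℝ}

noncomputable def tentMap (a x : ℝ) : ℝ := x / |x| * (√(2 * a * |x| - x ^ 2) - a)

lemma tentMap_of_pos (hx : 0 < x) : tentMap a x = -tentPartner a x := by
  rw [tentMap, tentPartner, abs_of_pos hx, div_self hx.ne']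
  ring

lemma tentMap_of_neg (hx : x < 0) : tentMap a x = tentPartner a (-x) := by
  rw [tentMap, tentPartner, abs_of_neg hx, div_neg, div_self hx.ne, neg_sq]
  ring

lemma tentMap_mem (hx : x ∈ Ioo (-a) a \ {0}) : tentMap a x ∈ Ioo (-a) a \ {0} := by
  obtain ⟨⟨hxa, hxa'⟩, hx0⟩ := hx
  rcases lt_or_gt_of_ne (hx0 : x ≠ 0) with hneg | hpos
  · have := tentPartner_mem_Ioo (a := a) ⟨neg_pos.2 hneg, by linarith⟩
    rw [tentMap_of_neg hneg]
    exact ⟨⟨by linarith [this.1], this.2⟩, this.1.ne'⟩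
  · have := tentPartner_mem_Ioo ⟨hpos, hxa'⟩
    rw [tentMap_of_pos hpos]
    exact ⟨⟨neg_lt_neg this.2, by linarith [this.1]⟩, (neg_neg_of_pos this.1).ne⟩

lemma tentMap_tentMap (hx : x ∈ Ioo (-a) a \ {0}) : tentMap a (tentMap a x) = x := by
  obtain ⟨⟨hxa, hxa'⟩, hx0⟩ := hx
  rcases lt_or_gt_of_ne (hx0 : x ≠ 0) with hneg | hpos
  · have := tentPartner_mem_Ioo (a := a) ⟨neg_pos.2 hneg, by linarith⟩
    rw [tentMap_of_neg hneg, tentMap_of_pos this.1,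
      tentPartner_tentPartner ⟨by linarith, by linarith⟩, neg_neg]
  · have := tentPartner_mem_Ioo ⟨hpos, hxa'⟩
    rw [tentMap_of_pos hpos, tentMap_of_neg (neg_neg_of_pos this.1), neg_neg,
      tentPartner_tentPartner ⟨hpos.le, hxa'.le⟩]

lemma bijOn_tentMap : BijOn (tentMap a) (Ioo (-a) a \ {0}) (Ioo (-a) a \ {0}) :=
  InvOn.bijOn ⟨fun _ hx => tentMap_tentMap hx, fun _ hx => tentMap_tentMap hx⟩
    (fun _ hx => tentMap_mem hx) (fun _ hx => tentMap_mem hx)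

lemma abs_tentMap (hx : x ∈ Ioo (-a) a \ {0}) : |tentMap a x| = tentPartner a |x| := by
  obtain ⟨⟨hxa, hxa'⟩, hx0⟩ := hx
  rcases lt_or_gt_of_ne (hx0 : x ≠ 0) with hneg | hpos
  · have := tentPartner_mem_Ioo (a := a) ⟨neg_pos.2 hneg, by linarith⟩
    rw [tentMap_of_neg hneg, abs_of_neg hneg, abs_of_pos this.1]
  · have := tentPartner_mem_Ioo ⟨hpos, hxa'⟩
    rw [tentMap_of_pos hpos, abs_neg, abs_of_pos hpos, abs_of_pos this.1]

lemma abs_sub_tentMap (hx : x ∈ Ioo (-a) a \ {0}) : |x - tentMap a x| = tentGap a |x| := by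
  obtain ⟨⟨hxa, hxa'⟩, hx0⟩ := hx
  rcases lt_or_gt_of_ne (hx0 : x ≠ 0) with hneg | hpos
  · have := tentPartner_mem_Ioo (a := a) ⟨neg_pos.2 hneg, by linarith⟩
    rw [tentMap_of_neg hneg, abs_of_neg (by linarith [this.1]), abs_of_neg hneg, tentGap]
    ring
  · have := tentPartner_mem_Ioo ⟨hpos, hxa'⟩
    rw [tentMap_of_pos hpos, abs_of_pos (by linarith [this.1]), abs_of_pos hpos, tentGap]
    ring

lemma hasDerivAt_tentMap (hx : x ∈ Ioo (-a) a \ {0}) :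
    HasDerivAt (tentMap a) ((a - |x|) / √(2 * a * |x| - |x| ^ 2)) x := by
  obtain ⟨⟨hxa, hxa'⟩, hx0⟩ := hx
  rcases lt_or_gt_of_ne (hx0 : x ≠ 0) with hneg | hpos
  · have hq := hasDerivAt_tentPartner (a := a) (r := -x) (by nlinarith)
    refine ((hq.comp x (hasDerivAt_neg x)).congr_of_eventuallyEq
      (Filter.eventually_of_mem (Iio_mem_nhds hneg) fun _ hy => tentMap_of_neg hy)).congr_deriv
        ?_
    rw [abs_of_neg hneg]
    ring
  · have hq := hasDerivAt_tentPartner (a := a) (r := x) (by nlinarith)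
    refine (hq.neg.congr_of_eventuallyEq
      (Filter.eventually_of_mem (Ioi_mem_nhds hpos) fun _ hy => tentMap_of_pos hy)).congr_deriv
        ?_
    rw [abs_of_pos hpos]
    ring

lemma tentPotential_abs_add_tentMap (ha : 0 < a) (hx : x ∈ Ioo (-a) a \ {0}) :
    tentPotential a |x| + tentPotential a |tentMap a x| = |x - tentMap a x|⁻¹ := by
  rw [abs_tentMap hx, abs_sub_tentMap hx]
  exact tentPotential_add_tentPartner ha ⟨abs_nonneg x, (abs_lt.2 hx.1).le⟩

end TentMap

section TentMeasure

variable {a : ℝ}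

noncomputable def tentDensity (a x : ℝ) : ℝ≥0∞ :=
  if x ∈ Icc (-a) a then ENNReal.ofReal ((a - |x|) / a ^ 2) else 0

lemma measurable_tentDensity : Measurable (tentDensity a) :=
  Measurable.ite measurableSet_Icc (by fun_prop) measurable_const

lemma ae_withDensity_tentDensity_mem :
    ∀ᵐ x ∂volume.withDensity (tentDensity a), x ∈ Ioo (-a) a \ {0} := by
  refine (ae_withDensity_iff measurable_tentDensity).2 <|
    (Measure.ae_ne volume 0).mono fun x hx0 hρ => ⟨?_, hx0⟩
  refine abs_lt.1 ?_
  by_contra hxa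
  refine hρ ?_
  rw [tentDensity, ite_eq_right_iff]
  exact fun _ => ENNReal.ofReal_eq_zero.2
    (div_nonpos_of_nonpos_of_nonneg (by linarith [not_lt.1 hxa]) (sq_nonneg a))

lemma integral_tent_eq_one (ha : 0 < a) : ∫ x in (-a)..a, (a - |x|) / a ^ 2 = 1 := by
  have hint : ∀ b c : ℝ, IntervalIntegrable (fun x => a - |x|) volume b c := fun b c =>
    (by fun_prop : Continuous fun x : ℝ => a - |x|).intervalIntegrable b c
  have hleft : ∫ x in (-a)..0, (a - |x|) = ∫ x in (-a)..0, (a + x) :=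
    intervalIntegral.integral_congr fun x hx => by
      rw [uIcc_of_le (by linarith)] at hx
      simp [abs_of_nonpos hx.2]
  have hright : ∫ x in (0 : ℝ)..a, (a - |x|) = ∫ x in (0 : ℝ)..a, (a - x) :=
    intervalIntegral.integral_congr fun x hx => by
      rw [uIcc_of_le ha.le] at hx
      simp [abs_of_nonneg hx.1]
  rw [intervalIntegral.integral_div,
    ← intervalIntegral.integral_add_adjacent_intervals (hint _ 0) (hint 0 _), hleft, hright,
    intervalIntegral.integral_add intervalIntegrable_const intervalIntegral.intervalIntegrable_id,
    intervalIntegral.integral_sub intervalIntegrable_const intervalIntegral.intervalIntegrable_id,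
    intervalIntegral.integral_const, intervalIntegral.integral_const, integral_id, integral_id,
    smul_eq_mul, smul_eq_mul]
  field_simp
  ring

lemma isProbabilityMeasure_withDensity_tentDensity (ha : 0 < a) :
    IsProbabilityMeasure (volume.withDensity (tentDensity a)) := by
  have hρ :
      tentDensity a = (Icc (-a) a).indicator fun x => ENNReal.ofReal ((a - |x|) / a ^ 2) := by
    funext x
    simp only [tentDensity, indicator_apply]
  have hnn : 0 ≤ᵐ[volume.restrict (Icc (-a) a)] fun x => (a - |x|) / a ^ 2 :=
    (ae_restrict_iff' measurableSet_Icc).2 <| ae_of_all _ fun x hx =>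
      div_nonneg (sub_nonneg.2 (abs_le.2 hx)) (sq_nonneg a)
  constructor
  rw [withDensity_apply _ MeasurableSet.univ, Measure.restrict_univ, hρ,
    lintegral_indicator measurableSet_Icc,
    ← ofReal_integral_eq_lintegral_ofReal
      ((by fun_prop : Continuous fun x : ℝ => (a - |x|) / a ^ 2).integrableOn_Icc) hnn,
    integral_Icc_eq_integral_Ioc, ← intervalIntegral.integral_of_le (by linarith),
    integral_tent_eq_one ha, ENNReal.ofReal_one]

lemma tentMap_jacobian {x : ℝ} (hx : x ∈ Ioo (-a) a \ {0}) :
    ENNReal.ofReal |(a - |x|) / √(2 * a * |x| - |x| ^ 2)| * tentDensity a (tentMap a x) =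
      tentDensity a x := by
  have hr : |x| ∈ Ioo 0 a := ⟨abs_pos.2 hx.2, abs_lt.2 hx.1⟩
  have hsqrt : 0 < √(2 * a * |x| - |x| ^ 2) := Real.sqrt_pos.2 (by nlinarith [hr.1, hr.2])
  rw [tentDensity, tentDensity, if_pos (Ioo_subset_Icc_self (tentMap_mem hx).1),
    if_pos (Ioo_subset_Icc_self hx.1), abs_tentMap hx, tentPartner, _root_.sub_sub_cancel,
    abs_of_nonneg (div_nonneg (sub_nonneg.2 hr.2.le) hsqrt.le),
    ← ENNReal.ofReal_mul (div_nonneg (sub_nonneg.2 hr.2.le) hsqrt.le)]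
  exact congrArg ENNReal.ofReal (div_mul_div_cancel₀ hsqrt.ne')

lemma measurePreserving_tentMap :
    MeasurePreserving (tentMap a) (volume.withDensity (tentDensity a))
      (volume.withDensity (tentDensity a)) := by
  have hmeas : Measurable (tentMap a) := by unfold tentMap; fun_prop
  refine ⟨hmeas, map_withDensity_eq_self_of_jacobian
    (measurableSet_Ioo.diff (measurableSet_singleton 0)) ae_withDensity_tentDensity_mem hmeas
    (fun x hx => (hasDerivAt_tentMap hx).hasDerivWithinAt) bijOn_tentMap
    fun x hx => tentMap_jacobian hx⟩

lemma integrable_tentPotential_abs (ha : 0 < a) :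
    Integrable (fun x => tentPotential a |x|) (volume.withDensity (tentDensity a)) := by
  have := isProbabilityMeasure_withDensity_tentDensity ha
  have hIcc : ∀ᵐ x ∂volume.withDensity (tentDensity a), x ∈ Icc (-a) a :=
    ae_withDensity_tentDensity_mem.mono fun x hx => Ioo_subset_Icc_self hx.1
  rw [← Measure.restrict_eq_self_of_ae_mem hIcc]
  exact ((continuousOn_tentPotential ha).comp_continuous continuous_abs fun x =>
    (neg_lt_zero.2 ha).trans_le (abs_nonneg x)).continuousOn.integrableOn_compact isCompact_Icc

end TentMeasure

/-- For the probability measure `μ` on `[-a,a]` with density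
`ρ(x) = (a - |x|)/a²`, the map `f(x) = (x/|x|)(√(2a|x| - x²) - a)` pushes `μ`
forward to itself and the plan `(id,f)_#μ` is optimal for the two-marginal
Kantorovich problem with Coulomb cost. -/
theorem tent_density_comotion_optimal
    (a : ℝ) (ha : 0 < a)
    (μ : Measure ℝ)
    (hμ : μ = volume.withDensity
      (fun x => if x ∈ Set.Icc (-a) a then ENNReal.ofReal ((a - |x|) / a ^ 2) else 0))
    (f : ℝ → ℝ)
    (hf : ∀ x, x ≠ 0 → f x = (x / |x|) * (Real.sqrt (2 * a * |x| - x ^ 2) - a)) :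
    Measure.map f μ = μ ∧
    ∫⁻ x, (edist x (f x))⁻¹ ∂μ =
      ⨅ (γ : Measure (ℝ × ℝ))
        (_ : IsProbabilityMeasure γ)
        (_ : Measure.map Prod.fst γ = μ)
        (_ : Measure.map Prod.snd γ = μ),
        ∫⁻ p, (edist p.1 p.2)⁻¹ ∂γ := by
  obtain rfl : μ = volume.withDensity (tentDensity a) := hμ
  have := isProbabilityMeasure_withDensity_tentDensity ha
  have hS := ae_withDensity_tentDensity_mem (a := a)
  have hfg : f =ᵐ[volume.withDensity (tentDensity a)] tentMap a := hS.mono fun x hx => hf x hx.2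
  have hT := measurePreserving_tentMap (a := a)
  refine ⟨(Measure.map_congr hfg).trans hT.map_eq, ?_⟩
  rw [lintegral_congr_ae (hfg.mono fun x hx => by rw [hx])]
  refine lintegral_eq_iInf_of_potential (c := fun x y => (edist x y)⁻¹) (by fun_prop) hT
    (integrable_tentPotential_abs ha) (hS.mono fun x hx => Ioo_subset_Icc_self hx.1)
    (fun x hx y hy => ?_) (hS.mono fun x hx => ?_) (hS.mono fun x hx => ?_)
  · rcases eq_or_ne x y with rfl | hxy
    · simp
    · rw [inv_edist_eq_ofReal_inv_abs hxy]
      exact ENNReal.ofReal_le_ofReal (tentPotential_abs_add_le ha hx hy hxy)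
  · have hpos : 0 < |x - tentMap a x| :=
      abs_sub_tentMap hx ▸ tentGap_pos ha ((neg_lt_zero.2 ha).trans_le (abs_nonneg x))
    rw [inv_edist_eq_ofReal_inv_abs (sub_ne_zero.1 (abs_pos.1 hpos)),
      tentPotential_abs_add_tentMap ha hx]
  · rw [tentPotential_abs_add_tentMap ha hx]
    positivity
end

section
/- Let μ be the Lebesgue (uniform) probability measure on [0,1]. Define f_2(x) = x + 1/3 if x ≤ 2/3 and f_2(x) = x - 2/3 if x > 2/3, and f_3(x) = x + 2/3 if x ≤ 1/3 and f_3(x) = x - 1/3 if x > 1/3. Then f_3 = f_2 ∘ f_2 (up to a Lebesgue-null set), both f_2 and f_3 push μ forward to μ, and the plan γ = (id, f_2, f_3)_# μ is optimal for the 3-marginal Kantorovich problem with Coulomb cost: ∫_0^1 [1/|x - f_2(x)| + 1/|x - f_3(x)| + 1/|f_2(x) - f_3(x)|] dx = inf_{γ ∈ Π(μ,μ,μ)} ∫_{[0,1]^3} [1/|x_1-x_2| + 1/|x_1-x_3| + 1/|x_2-x_3|] dγ. -/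
open MeasureTheory ENNReal Set intervalIntegral

noncomputable def gPot (x : ℝ) : ℝ := 45/4 * min x (min (1/3) (1-x))
noncomputable def uPot (x : ℝ) : ℝ≥0∞ := ENNReal.ofReal (gPot x)

lemma gPot_nonneg {t : ℝ} (h0 : 0 ≤ t) (h1 : t ≤ 1) : 0 ≤ gPot t :=
  mul_nonneg (by norm_num) (le_min h0 (le_min (by norm_num) (by linarith)))

lemma gPot_cont : Continuous gPot :=
  continuous_const.mul (continuous_id.min (continuous_const.min
    (continuous_const.sub continuous_id)))

lemma uPot_meas : Measurable uPot :=
  (ENNReal.continuous_ofReal.comp gPot_cont).measurable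

lemma core_ineq {a b : ℝ} (ha : 0 < a) (hb : 0 < b) :
    45/4 * (4/3 - (a+b)) ≤ (a)⁻¹ + (b)⁻¹ + (a+b)⁻¹ := by
  have hs : 0 < a + b := by linarith
  have k1 : 4/(a+b) ≤ a⁻¹ + b⁻¹ := by
    rw [inv_eq_one_div, inv_eq_one_div, div_add_div _ _ (ne_of_gt ha) (ne_of_gt hb),
      div_le_div_iff₀ hs (by positivity)]
    nlinarith [sq_nonneg (a-b)]
  have k2 : 45/4 * (4/3 - (a+b)) ≤ 5/(a+b) := by
    rw [le_div_iff₀ hs]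
    nlinarith [sq_nonneg (3*(a+b) - 2)]
  have k3 : (a+b)⁻¹ = 1/(a+b) := by rw [inv_eq_one_div]
  have : 4/(a+b) + 1/(a+b) = 5/(a+b) := by ring
  linarith

lemma edist_inv_eq {a b : ℝ} (h : a < b) : (edist a b)⁻¹ = ENNReal.ofReal (b - a)⁻¹ := by
  rw [edist_dist, Real.dist_eq, abs_of_neg (by linarith : a - b < 0), neg_sub,
    ← ENNReal.ofReal_inv_of_pos (by linarith : (0:ℝ) < b - a)]

lemma pot_le_ordered {x y z : ℝ} (hx : 0 ≤ x) (hz : z ≤ 1) (hxy : x < y) (hyz : y < z) :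
    uPot x + uPot y + uPot z ≤ (edist x y)⁻¹ + (edist x z)⁻¹ + (edist y z)⁻¹ := by
  have hy0 : 0 ≤ y := by linarith
  have hy1 : y ≤ 1 := by linarith
  have hx1 : x ≤ 1 := by linarith
  have hz0 : 0 ≤ z := by linarith
  have hreal : gPot x + gPot y + gPot z ≤ (y - x)⁻¹ + (z - x)⁻¹ + (z - y)⁻¹ := by
    have h1 : gPot x ≤ 45/4 * x := by
      have : min x (min (1/3) (1-x)) ≤ x := min_le_left _ _
      unfold gPot; nlinarith
    have h2 : gPot y ≤ 45/4 * (1/3) := by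
      have : min y (min (1/3) (1-y)) ≤ 1/3 := le_trans (min_le_right _ _) (min_le_left _ _)
      unfold gPot; nlinarith
    have h3 : gPot z ≤ 45/4 * (1-z) := by
      have : min z (min (1/3) (1-z)) ≤ 1-z := le_trans (min_le_right _ _) (min_le_right _ _)
      unfold gPot; nlinarith
    have key := core_ineq (show (0:ℝ) < y - x by linarith) (show (0:ℝ) < z - y by linarith)
    rw [show y - x + (z - y) = z - x by ring] at key
    linarith
  have e1 := edist_inv_eq hxy
  have e2 := edist_inv_eq (lt_trans hxy hyz)
  have e3 := edist_inv_eq hyz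
  rw [e1, e2, e3]
  calc uPot x + uPot y + uPot z
      = ENNReal.ofReal (gPot x + gPot y + gPot z) := by
        rw [ENNReal.ofReal_add (add_nonneg (gPot_nonneg hx hx1) (gPot_nonneg hy0 hy1))
          (gPot_nonneg hz0 hz),
          ENNReal.ofReal_add (gPot_nonneg hx hx1) (gPot_nonneg hy0 hy1)]
        rfl
    _ ≤ ENNReal.ofReal ((y - x)⁻¹ + (z - x)⁻¹ + (z - y)⁻¹) := ENNReal.ofReal_le_ofReal hreal
    _ ≤ ENNReal.ofReal ((y - x)⁻¹) + ENNReal.ofReal ((z - x)⁻¹) + ENNReal.ofReal ((z - y)⁻¹) :=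
        le_trans ENNReal.ofReal_add_le (add_le_add_left ENNReal.ofReal_add_le _)

lemma pot_le {x y z : ℝ} (hx : x ∈ Icc (0:ℝ) 1) (hy : y ∈ Icc (0:ℝ) 1) (hz : z ∈ Icc (0:ℝ) 1) :
    uPot x + uPot y + uPot z ≤ (edist x y)⁻¹ + (edist x z)⁻¹ + (edist y z)⁻¹ := by
  rcases eq_or_ne x y with rfl | hxy
  · simp [edist_self]
  rcases eq_or_ne x z with rfl | hxz
  · simp [edist_self]
  rcases eq_or_ne y z with rfl | hyz
  · simp [edist_self]
  rcases lt_trichotomy x y with h1 | h1 | h1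
  · rcases lt_trichotomy y z with h2 | h2 | h2
    · exact pot_le_ordered hx.1 hz.2 h1 h2
    · exact absurd h2 hyz
    · rcases lt_trichotomy x z with h3 | h3 | h3
      · have H := pot_le_ordered hx.1 hy.2 h3 h2
        calc uPot x + uPot y + uPot z = uPot x + uPot z + uPot y := by ring
          _ ≤ (edist x z)⁻¹ + (edist x y)⁻¹ + (edist z y)⁻¹ := H
          _ = (edist x y)⁻¹ + (edist x z)⁻¹ + (edist y z)⁻¹ := by rw [edist_comm z y]; ring
      · exact absurd h3 hxz
      · have H := pot_le_ordered hz.1 hy.2 h3 h1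
        calc uPot x + uPot y + uPot z = uPot z + uPot x + uPot y := by ring
          _ ≤ (edist z x)⁻¹ + (edist z y)⁻¹ + (edist x y)⁻¹ := H
          _ = (edist x y)⁻¹ + (edist x z)⁻¹ + (edist y z)⁻¹ := by
              rw [edist_comm z x, edist_comm z y]; ring
  · exact absurd h1 hxy
  · rcases lt_trichotomy x z with h2 | h2 | h2
    · have H := pot_le_ordered hy.1 hz.2 h1 h2
      calc uPot x + uPot y + uPot z = uPot y + uPot x + uPot z := by ring
        _ ≤ (edist y x)⁻¹ + (edist y z)⁻¹ + (edist x z)⁻¹ := H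
        _ = (edist x y)⁻¹ + (edist x z)⁻¹ + (edist y z)⁻¹ := by rw [edist_comm y x]; ring
    · exact absurd h2 hxz
    · rcases lt_trichotomy y z with h3 | h3 | h3
      · have H := pot_le_ordered hy.1 hx.2 h3 h2
        calc uPot x + uPot y + uPot z = uPot y + uPot z + uPot x := by ring
          _ ≤ (edist y z)⁻¹ + (edist y x)⁻¹ + (edist z x)⁻¹ := H
          _ = (edist x y)⁻¹ + (edist x z)⁻¹ + (edist y z)⁻¹ := by
              rw [edist_comm y x, edist_comm z x]; ring
      · exact absurd h3 hyz
      · have H := pot_le_ordered hz.1 hx.2 h3 h1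
        calc uPot x + uPot y + uPot z = uPot z + uPot y + uPot x := by ring
          _ ≤ (edist z y)⁻¹ + (edist z x)⁻¹ + (edist y x)⁻¹ := H
          _ = (edist x y)⁻¹ + (edist x z)⁻¹ + (edist y z)⁻¹ := by
              rw [edist_comm z y, edist_comm z x, edist_comm y x]; ring

lemma map_shift_restrict (c : ℝ) (f : ℝ → ℝ) (_hf : Measurable f) (S : Set ℝ)
    (hS : MeasurableSet S) (h : ∀ x ∈ S, f x = x + c) :
    Measure.map f (volume.restrict S) = volume.restrict ((· + c) '' S) := by
  have he : f =ᵐ[volume.restrict S] (· + c) :=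
    (ae_restrict_iff' hS).2 (ae_of_all _ h)
  rw [Measure.map_congr he]
  exact ((measurePreserving_add_right volume c).restrict_image_emb
    (measurableEmbedding_addRight c) S).map_eq

lemma restrict_Icc_eq_Ioc (a b : ℝ) :
    (volume : Measure ℝ).restrict (Icc a b) = volume.restrict (Ioc a b) :=
  (Measure.restrict_congr_set Ioc_ae_eq_Icc).symm

lemma pot_integral :
    ∫⁻ x, uPot x ∂(volume.restrict (Icc (0:ℝ) 1)) = ENNReal.ofReal (5/2) := by
  have hint : IntegrableOn gPot (Icc (0:ℝ) 1) volume := gPot_cont.integrableOn_Icc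
  have hnn : 0 ≤ᵐ[volume.restrict (Icc (0:ℝ) 1)] gPot :=
    (ae_restrict_iff' measurableSet_Icc).2 (ae_of_all _ fun x hx => gPot_nonneg hx.1 hx.2)
  have h1 : ∫⁻ x, uPot x ∂(volume.restrict (Icc (0:ℝ) 1))
      = ENNReal.ofReal (∫ x in Icc (0:ℝ) 1, gPot x) :=
    (ofReal_integral_eq_lintegral_ofReal hint hnn).symm
  rw [h1]
  congr 1
  have i1 : IntervalIntegrable gPot volume 0 (1/3) := gPot_cont.intervalIntegrable _ _
  have i2 : IntervalIntegrable gPot volume (1/3) (2/3) := gPot_cont.intervalIntegrable _ _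
  have i3 : IntervalIntegrable gPot volume (2/3) 1 := gPot_cont.intervalIntegrable _ _
  have s1 : ∫ x in (0:ℝ)..(1/3), gPot x = 5/8 := by
    rw [integral_congr (g := fun x => 45/4 * x) (fun x hx => by
      rw [uIcc_of_le (by norm_num)] at hx
      unfold gPot
      rw [min_eq_left (le_min (by linarith [hx.2]) (by linarith [hx.1, hx.2]))])]
    rw [intervalIntegral.integral_const_mul, integral_id]
    norm_num
  have s2 : ∫ x in (1/3:ℝ)..(2/3), gPot x = 5/4 := by
    rw [integral_congr (g := fun _ => (15/4 : ℝ)) (fun x hx => by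
      rw [uIcc_of_le (by norm_num)] at hx
      unfold gPot
      rw [min_eq_left (by linarith [hx.2] : (1/3:ℝ) ≤ 1 - x),
        min_eq_right hx.1]
      norm_num)]
    simp
    norm_num
  have s3 : ∫ x in (2/3:ℝ)..1, gPot x = 5/8 := by
    rw [integral_congr (g := fun x => 45/4 - 45/4 * x) (fun x hx => by
      rw [uIcc_of_le (by norm_num)] at hx
      unfold gPot
      rw [min_eq_right (by linarith [hx.1] : (1 - x : ℝ) ≤ 1/3),
        min_eq_right (by linarith [hx.1, hx.2] : (1 - x : ℝ) ≤ x)]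
      ring)]
    rw [intervalIntegral.integral_sub (f := fun _ => (45/4 : ℝ)) (g := fun x : ℝ => 45/4 * x) (intervalIntegrable_const)
      (((continuous_const.mul continuous_id').intervalIntegrable _ _ :
        IntervalIntegrable (fun x : ℝ => 45/4 * x) volume (2/3) 1)),
      intervalIntegral.integral_const_mul, integral_id, intervalIntegral.integral_const]
    norm_num
  rw [MeasureTheory.integral_Icc_eq_integral_Ioc,
    ← intervalIntegral.integral_of_le (by norm_num : (0:ℝ) ≤ 1),
    ← integral_add_adjacent_intervals (i1.trans i2) i3, ← integral_add_adjacent_intervals i1 i2,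
    s1, s2, s3]
  norm_num

/-- For the uniform measure `μ` on `[0,1]` and the explicit maps
`f₂`, `f₃`, one has `f₃ = f₂ ∘ f₂` (a.e.), both maps push `μ` forward to `μ`, and the
plan `(id, f₂, f₃)_#μ` is optimal for the 3-marginal Kantorovich problem with
Coulomb cost. -/
theorem uniform_three_marginal_optimal
    (μ : Measure ℝ) (hμ : μ = volume.restrict (Set.Icc (0 : ℝ) 1))
    (f2 f3 : ℝ → ℝ)
    (hf2 : f2 = fun x => if x ≤ 2 / 3 then x + 1 / 3 else x - 2 / 3)
    (hf3 : f3 = fun x => if x ≤ 1 / 3 then x + 2 / 3 else x - 1 / 3) :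
    (∀ᵐ x ∂μ, f3 x = f2 (f2 x)) ∧
    Measure.map f2 μ = μ ∧ Measure.map f3 μ = μ ∧
    ∫⁻ x, ((edist x (f2 x))⁻¹ + (edist x (f3 x))⁻¹ + (edist (f2 x) (f3 x))⁻¹) ∂μ =
      ⨅ (γ : Measure (ℝ × ℝ × ℝ))
        (_ : IsProbabilityMeasure γ)
        (_ : Measure.map (fun p : ℝ × ℝ × ℝ => p.1) γ = μ)
        (_ : Measure.map (fun p : ℝ × ℝ × ℝ => p.2.1) γ = μ)
        (_ : Measure.map (fun p : ℝ × ℝ × ℝ => p.2.2) γ = μ),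
        ∫⁻ p, ((edist p.1 p.2.1)⁻¹ + (edist p.1 p.2.2)⁻¹ + (edist p.2.1 p.2.2)⁻¹) ∂γ := by
  have hf2m : Measurable f2 := by
    rw [hf2]
    exact Measurable.ite (measurableSet_le measurable_id measurable_const)
      (measurable_id.add_const _) (measurable_id.sub measurable_const)
  have hf3m : Measurable f3 := by
    rw [hf3]
    exact Measurable.ite (measurableSet_le measurable_id measurable_const)
      (measurable_id.add_const _) (measurable_id.sub measurable_const)
  have hprobμ : IsProbabilityMeasure μ := by
    constructor
    rw [hμ, Measure.restrict_apply_univ, Real.volume_Icc]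
    norm_num
  haveI := hprobμ
  -- Part 1
  have part1 : ∀ᵐ x ∂μ, f3 x = f2 (f2 x) := by
    rw [hμ]
    refine (ae_restrict_iff' measurableSet_Icc).2 (ae_of_all _ fun x hx => ?_)
    simp only [hf2, hf3]
    rcases le_or_gt x (1/3) with h | h
    · rw [if_pos (by linarith : x ≤ 1/3), if_pos (by linarith : x ≤ 2/3),
        if_pos (by linarith : x + 1/3 ≤ 2/3)]
      ring
    · rcases le_or_gt x (2/3) with h2 | h2
      · rw [if_neg (by push_neg; linarith : ¬ x ≤ 1/3), if_pos h2,
          if_neg (by push_neg; linarith : ¬ x + 1/3 ≤ 2/3)]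
        ring
      · rw [if_neg (by push_neg; linarith : ¬ x ≤ 1/3), if_neg (by push_neg; linarith : ¬ x ≤ 2/3),
          if_pos (by linarith [hx.2] : x - 2/3 ≤ 2/3)]
        ring
  -- Part 2
  have part2 : Measure.map f2 μ = μ := by
    have hsplit : (volume : Measure ℝ).restrict (Icc 0 1)
        = volume.restrict (Icc 0 (2/3)) + volume.restrict (Ioc (2/3) 1) := by
      rw [← Measure.restrict_union
        (Set.disjoint_left.2 fun x hx hx' => absurd hx.2 (not_le.2 hx'.1)) measurableSet_Ioc,
        Set.Icc_union_Ioc_eq_Icc (by norm_num) (by norm_num)]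
    rw [hμ, hsplit, Measure.map_add _ _ hf2m,
      map_shift_restrict (1/3) f2 hf2m _ measurableSet_Icc
        (fun x hx => by simp only [hf2]; rw [if_pos hx.2]),
      map_shift_restrict (-(2/3)) f2 hf2m _ measurableSet_Ioc
        (fun x hx => by simp only [hf2]; rw [if_neg (not_le.2 hx.1)]; ring),
      image_add_const_Icc, image_add_const_Ioc]
    norm_num
    rw [restrict_Icc_eq_Ioc (1/3) 1,
      add_comm (volume.restrict (Ioc (1/3) 1)) (volume.restrict (Ioc 0 (1/3))),
      ← Measure.restrict_union
        (Set.disjoint_left.2 fun x hx hx' => absurd hx.2 (not_le.2 hx'.1)) measurableSet_Ioc,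
      Set.Ioc_union_Ioc_eq_Ioc (by norm_num) (by norm_num), ← hsplit]
    exact (restrict_Icc_eq_Ioc 0 1).symm
  -- Part 3
  have part3 : Measure.map f3 μ = μ := by
    have hsplit : (volume : Measure ℝ).restrict (Icc 0 1)
        = volume.restrict (Icc 0 (1/3)) + volume.restrict (Ioc (1/3) 1) := by
      rw [← Measure.restrict_union
        (Set.disjoint_left.2 fun x hx hx' => absurd hx.2 (not_le.2 hx'.1)) measurableSet_Ioc,
        Set.Icc_union_Ioc_eq_Icc (by norm_num) (by norm_num)]
    rw [hμ, hsplit, Measure.map_add _ _ hf3m,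
      map_shift_restrict (2/3) f3 hf3m _ measurableSet_Icc
        (fun x hx => by simp only [hf3]; rw [if_pos hx.2]),
      map_shift_restrict (-(1/3)) f3 hf3m _ measurableSet_Ioc
        (fun x hx => by simp only [hf3]; rw [if_neg (not_le.2 hx.1)]; ring),
      image_add_const_Icc, image_add_const_Ioc]
    norm_num
    rw [restrict_Icc_eq_Ioc (2/3) 1,
      add_comm (volume.restrict (Ioc (2/3) 1)) (volume.restrict (Ioc 0 (2/3))),
      ← Measure.restrict_union
        (Set.disjoint_left.2 fun x hx hx' => absurd hx.2 (not_le.2 hx'.1)) measurableSet_Ioc,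
      Set.Ioc_union_Ioc_eq_Ioc (by norm_num) (by norm_num), ← hsplit]
    exact (restrict_Icc_eq_Ioc 0 1).symm
  -- cost is constant on [0,1]
  have hcost : ∀ x ∈ Icc (0:ℝ) 1,
      (edist x (f2 x))⁻¹ + (edist x (f3 x))⁻¹ + (edist (f2 x) (f3 x))⁻¹
        = ENNReal.ofReal (15/2) := by
    intro x hx
    rcases le_or_gt x (1/3) with h | h
    · have e2 : f2 x = x + 1/3 := by simp only [hf2]; rw [if_pos (by linarith)]
      have e3 : f3 x = x + 2/3 := by simp only [hf3]; rw [if_pos h]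
      rw [e2, e3, edist_inv_eq (by linarith : x < x + 1/3),
        edist_inv_eq (by linarith : x < x + 2/3),
        edist_inv_eq (by linarith : x + 1/3 < x + 2/3),
        show x + 1/3 - x = 1/3 by ring, show x + 2/3 - x = 2/3 by ring,
        show x + 2/3 - (x + 1/3) = 1/3 by ring,
        ← ENNReal.ofReal_add (by norm_num) (by norm_num),
        ← ENNReal.ofReal_add (by norm_num) (by norm_num)]
      norm_num
    · rcases le_or_gt x (2/3) with h2 | h2
      · have e2 : f2 x = x + 1/3 := by simp only [hf2]; rw [if_pos h2]
        have e3 : f3 x = x - 1/3 := by simp only [hf3]; rw [if_neg (not_le.2 h)]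
        rw [e2, e3, edist_inv_eq (by linarith : x < x + 1/3),
          edist_comm x (x - 1/3), edist_inv_eq (by linarith : x - 1/3 < x),
          edist_comm (x + 1/3) (x - 1/3), edist_inv_eq (by linarith : x - 1/3 < x + 1/3),
          show x + 1/3 - x = 1/3 by ring, show x - (x - 1/3) = 1/3 by ring,
          show x + 1/3 - (x - 1/3) = 2/3 by ring,
          ← ENNReal.ofReal_add (by norm_num) (by norm_num),
          ← ENNReal.ofReal_add (by norm_num) (by norm_num)]
        norm_num
      · have e2 : f2 x = x - 2/3 := by simp only [hf2]; rw [if_neg (not_le.2 h2)]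
        have e3 : f3 x = x - 1/3 := by simp only [hf3]; rw [if_neg (by push_neg; linarith)]
        rw [e2, e3, edist_comm x (x - 2/3), edist_inv_eq (by linarith : x - 2/3 < x),
          edist_comm x (x - 1/3), edist_inv_eq (by linarith : x - 1/3 < x),
          edist_inv_eq (by linarith : x - 2/3 < x - 1/3),
          show x - (x - 2/3) = 2/3 by ring, show x - (x - 1/3) = 1/3 by ring,
          show x - 1/3 - (x - 2/3) = 1/3 by ring,
          ← ENNReal.ofReal_add (by norm_num) (by norm_num),
          ← ENNReal.ofReal_add (by norm_num) (by norm_num)]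
        norm_num
  have haecost : ∀ᵐ x ∂μ,
      (edist x (f2 x))⁻¹ + (edist x (f3 x))⁻¹ + (edist (f2 x) (f3 x))⁻¹
        = ENNReal.ofReal (15/2) := by
    rw [hμ]
    exact (ae_restrict_iff' measurableSet_Icc).2 (ae_of_all _ hcost)
  have hLHS : ∫⁻ x, ((edist x (f2 x))⁻¹ + (edist x (f3 x))⁻¹ + (edist (f2 x) (f3 x))⁻¹) ∂μ
      = ENNReal.ofReal (15/2) := by
    rw [lintegral_congr_ae haecost, lintegral_const, measure_univ, mul_one]
  -- the candidate plan
  set T : ℝ → ℝ × ℝ × ℝ := fun x => (x, f2 x, f3 x) with hT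
  have hTm : Measurable T := measurable_id.prodMk (hf2m.prodMk hf3m)
  have ccost : Continuous (fun p : ℝ × ℝ × ℝ =>
      (edist p.1 p.2.1)⁻¹ + (edist p.1 p.2.2)⁻¹ + (edist p.2.1 p.2.2)⁻¹) :=
    ((continuous_fst.edist continuous_snd.fst).inv.add
      ((continuous_fst.edist continuous_snd.snd).inv)).add
      ((continuous_snd.fst.edist continuous_snd.snd).inv)
  have hcostm := ccost.measurable
  haveI hγprob : IsProbabilityMeasure (Measure.map T μ) :=
    Measure.isProbabilityMeasure_map hTm.aemeasurable
  have hm1 : Measure.map (fun p : ℝ × ℝ × ℝ => p.1) (Measure.map T μ) = μ := by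
    rw [Measure.map_map measurable_fst hTm]
    exact Measure.map_id
  have hm2 : Measure.map (fun p : ℝ × ℝ × ℝ => p.2.1) (Measure.map T μ) = μ := by
    rw [Measure.map_map measurable_snd.fst hTm]
    exact part2
  have hm3 : Measure.map (fun p : ℝ × ℝ × ℝ => p.2.2) (Measure.map T μ) = μ := by
    rw [Measure.map_map measurable_snd.snd hTm]
    exact part3
  have hγval : ∫⁻ p, ((edist p.1 p.2.1)⁻¹ + (edist p.1 p.2.2)⁻¹ + (edist p.2.1 p.2.2)⁻¹)
      ∂(Measure.map T μ) = ENNReal.ofReal (15/2) := by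
    rw [lintegral_map hcostm hTm]
    exact hLHS
  -- duality lower bound
  have hdual : ∀ γ : Measure (ℝ × ℝ × ℝ), IsProbabilityMeasure γ →
      Measure.map (fun p : ℝ × ℝ × ℝ => p.1) γ = μ →
      Measure.map (fun p : ℝ × ℝ × ℝ => p.2.1) γ = μ →
      Measure.map (fun p : ℝ × ℝ × ℝ => p.2.2) γ = μ →
      ENNReal.ofReal (15/2)
        ≤ ∫⁻ p, ((edist p.1 p.2.1)⁻¹ + (edist p.1 p.2.2)⁻¹ + (edist p.2.1 p.2.2)⁻¹) ∂γ := by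
    intro γ _ h1 h2 h3
    have mem : ∀ f : ℝ × ℝ × ℝ → ℝ, Measurable f → Measure.map f γ = μ →
        ∀ᵐ p ∂γ, f p ∈ Icc (0:ℝ) 1 := by
      intro f hfm hmap
      rw [ae_iff]
      have hset : {p | ¬ f p ∈ Icc (0:ℝ) 1} = f ⁻¹' (Icc (0:ℝ) 1)ᶜ := rfl
      rw [hset, ← Measure.map_apply hfm measurableSet_Icc.compl, hmap, hμ,
        Measure.restrict_apply measurableSet_Icc.compl, compl_inter_self, measure_empty]
    have m1 := mem _ measurable_fst h1
    have m2 := mem _ measurable_snd.fst h2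
    have m3 := mem _ measurable_snd.snd h3
    have step1 : ∫⁻ p, (uPot p.1 + uPot p.2.1 + uPot p.2.2) ∂γ
        ≤ ∫⁻ p, ((edist p.1 p.2.1)⁻¹ + (edist p.1 p.2.2)⁻¹ + (edist p.2.1 p.2.2)⁻¹) ∂γ := by
      refine lintegral_mono_ae ?_
      filter_upwards [m1, m2, m3] with p hp1 hp2 hp3
      exact pot_le hp1 hp2 hp3
    have split : ∫⁻ p, (uPot p.1 + uPot p.2.1 + uPot p.2.2) ∂γ
        = ∫⁻ p, uPot p.1 ∂γ + ∫⁻ p, uPot p.2.1 ∂γ + ∫⁻ p, uPot p.2.2 ∂γ := by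
      rw [lintegral_add_right _ (uPot_meas.comp' measurable_snd.snd),
        lintegral_add_right _ (uPot_meas.comp' measurable_snd.fst)]
    have e1 : ∫⁻ p, uPot p.1 ∂γ = ENNReal.ofReal (5/2) := by
      rw [← lintegral_map uPot_meas measurable_fst, h1, hμ]
      exact pot_integral
    have e2 : ∫⁻ p, uPot p.2.1 ∂γ = ENNReal.ofReal (5/2) := by
      rw [← lintegral_map uPot_meas measurable_snd.fst, h2, hμ]
      exact pot_integral
    have e3 : ∫⁻ p, uPot p.2.2 ∂γ = ENNReal.ofReal (5/2) := by
      rw [← lintegral_map uPot_meas measurable_snd.snd, h3, hμ]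
      exact pot_integral
    calc ENNReal.ofReal (15/2)
        = ENNReal.ofReal (5/2) + ENNReal.ofReal (5/2) + ENNReal.ofReal (5/2) := by
          rw [← ENNReal.ofReal_add (by norm_num) (by norm_num),
            ← ENNReal.ofReal_add (by norm_num) (by norm_num)]
          norm_num
      _ = ∫⁻ p, (uPot p.1 + uPot p.2.1 + uPot p.2.2) ∂γ := by rw [split, e1, e2, e3]
      _ ≤ _ := step1
  refine ⟨part1, part2, part3, ?_⟩
  rw [hLHS]
  apply le_antisymm
  · exact le_iInf fun γ => le_iInf fun hp => le_iInf fun h1 => le_iInf fun h2 =>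
      le_iInf fun h3 => hdual γ hp h1 h2 h3
  · exact iInf_le_of_le (Measure.map T μ) (iInf_le_of_le hγprob (iInf_le_of_le hm1
      (iInf_le_of_le hm2 (iInf_le_of_le hm3 (le_of_eq hγval)))))
end

section
/- Define f_2(x) = x + 1/3 if x ≤ 2/3 and f_2(x) = x - 2/3 if x > 2/3, f_3(x) = x + 2/3 if x ≤ 1/3 and f_3(x) = x - 1/3 if x > 1/3, and define u : [0,1] → ℝ by u(x) = (45/4)x for 0 ≤ x ≤ 1/3, u(x) = 15/4 for 1/3 ≤ x ≤ 2/3, and u(x) = -(45/4)x + 45/4 for 2/3 ≤ x ≤ 1. Then for every x ∈ (0,1) \ {1/3, 2/3}, u is differentiable at x and its derivative satisfies the equilibrium equation u'(x) = -∑_{i=2}^{3} (x - f_i(x)) / |x - f_i(x)|³. -/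
/-- The explicit Kantorovich potential `u` for the 3-marginal Coulomb
problem on `[0,1]` with uniform marginal satisfies the equilibrium equation
`u'(x) = -∑_{i=2}^{3} (x - fᵢ(x))/|x - fᵢ(x)|³` at every `x ∈ (0,1) \ {1/3, 2/3}`. -/
theorem potential_equilibrium_equation
    (f2 f3 u : ℝ → ℝ)
    (hf2 : f2 = fun x => if x ≤ 2 / 3 then x + 1 / 3 else x - 2 / 3)
    (hf3 : f3 = fun x => if x ≤ 1 / 3 then x + 2 / 3 else x - 1 / 3)
    (hu : u = fun x =>
      if x ≤ 1 / 3 then 45 / 4 * x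
      else if x ≤ 2 / 3 then 15 / 4
      else -(45 / 4) * x + 45 / 4) :
    ∀ x ∈ Set.Ioo (0 : ℝ) 1, x ≠ 1 / 3 → x ≠ 2 / 3 →
      HasDerivAt u
        (-((x - f2 x) / |x - f2 x| ^ 3 + (x - f3 x) / |x - f3 x| ^ 3)) x := by
  subst hf2; subst hf3; subst hu
  intro x hx h13 h23
  rcases lt_trichotomy x (1/3) with h | h | h
  · have heq : (fun y => if y ≤ 1/3 then 45/4*y else if y ≤ 2/3 then (15:ℝ)/4
        else -(45/4)*y + 45/4) =ᶠ[nhds x] (fun y => 45/4*y) := by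
      filter_upwards [Iio_mem_nhds h] with y hy
      simp only [Set.mem_Iio] at hy
      rw [if_pos (le_of_lt hy)]
    have hlin : HasDerivAt (fun y : ℝ => 45/4*y) (45/4) x := by
      simpa using (hasDerivAt_id x).const_mul (45/4 : ℝ)
    have hD := hlin.congr_of_eventuallyEq heq
    refine hD.congr_deriv ?_
    dsimp only
    have hx2 : x ≤ 2/3 := by linarith
    have hx3 : x ≤ 1/3 := le_of_lt h
    rw [if_pos hx2, if_pos hx3,
      show x - (x+1/3) = -(1/3 : ℝ) by ring, show x - (x+2/3) = -(2/3 : ℝ) by ring,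
      abs_neg, abs_neg]
    rw [abs_of_pos (by norm_num : (0:ℝ) < 1/3), abs_of_pos (by norm_num : (0:ℝ) < 2/3)]
    norm_num
  · exact absurd h h13
  · rcases lt_trichotomy x (2/3) with h2 | h2 | h2
    · have heq : (fun y => if y ≤ 1/3 then 45/4*y else if y ≤ 2/3 then (15:ℝ)/4
          else -(45/4)*y + 45/4) =ᶠ[nhds x] (fun _ => (15:ℝ)/4) := by
        filter_upwards [Ioo_mem_nhds h h2] with y hy
        simp only [Set.mem_Ioo] at hy
        rw [if_neg (by linarith [hy.1]), if_pos (le_of_lt hy.2)]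
      have hD := (hasDerivAt_const x ((15:ℝ)/4)).congr_of_eventuallyEq heq
      refine hD.congr_deriv ?_
      dsimp only
      rw [if_pos (le_of_lt h2), if_neg (not_le.mpr h),
        show x - (x+1/3) = -(1/3 : ℝ) by ring, show x - (x-1/3) = (1/3 : ℝ) by ring,
        abs_neg, abs_of_pos (by norm_num : (0:ℝ) < 1/3)]
      norm_num
    · exact absurd h2 h23
    · have heq : (fun y => if y ≤ 1/3 then 45/4*y else if y ≤ 2/3 then (15:ℝ)/4
          else -(45/4)*y + 45/4) =ᶠ[nhds x] (fun y => -(45/4)*y + 45/4) := by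
        filter_upwards [Ioi_mem_nhds h2] with y hy
        simp only [Set.mem_Ioi] at hy
        rw [if_neg (by linarith), if_neg (not_le.mpr hy)]
      have hlin : HasDerivAt (fun y : ℝ => -(45/4)*y + 45/4) (-(45/4)) x := by
        simpa using ((hasDerivAt_id x).const_mul (-(45/4) : ℝ)).add_const (45/4 : ℝ)
      have hD := hlin.congr_of_eventuallyEq heq
      refine hD.congr_deriv ?_
      dsimp only
      rw [if_neg (not_le.mpr h2), if_neg (by simp; linarith),
        show x - (x-2/3) = (2/3 : ℝ) by ring, show x - (x-1/3) = (1/3 : ℝ) by ring,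
        abs_of_pos (by norm_num : (0:ℝ) < 2/3), abs_of_pos (by norm_num : (0:ℝ) < 1/3)]
      norm_num
end

section
/- Let M ≥ 1, let γ̄ be an M×M matrix with strictly positive entries, and let ρ, ν ∈ ℝ_{>0}^M be probability vectors. Then there is a unique minimizer γ* of the Kullback–Leibler divergence KL(γ|γ̄) = ∑_{i,j} γ_{ij} log(γ_{ij}/γ̄_{ij}) over all nonnegative M×M matrices γ with row sums ρ (∑_j γ_{ij} = ρ_i for all i) and column sums ν (∑_i γ_{ij} = ν_j for all j), and there exist nonnegative vectors a, b ∈ ℝ_{≥0}^M such that γ*_{ij} = a_i b_j γ̄_{ij} for all i, j. -/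
/-!
The transport polytope is a nonempty compact convex set and `γ ↦ ∑ γᵢⱼ log (γᵢⱼ / γ̄ᵢⱼ)` is
continuous and strictly convex on the nonnegative orthant, so a minimizer exists and is unique.
Since `x log x` has slope `-∞` at `0`, moving towards the positive plan `ρ ⊗ ν` would decrease
the divergence at any minimizer with a zero entry; hence the minimizer is strictly positive.
Perturbing a positive minimizer along `(eᵢ - eᵢ₀) ⊗ (eⱼ - eⱼ₀)`, which preserves both marginals,
gives the first-order condition `Lᵢⱼ + Lᵢ₀ⱼ₀ = Lᵢⱼ₀ + Lᵢ₀ⱼ` for `L = log (γ* / γ̄)`, i.e. `L` is a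
sum of a row and a column potential, and exponentiating yields `γ*ᵢⱼ = aᵢ bⱼ γ̄ᵢⱼ`.
-/

open Real Filter Topology Function

section DiscreteKL

variable {ι : Type*} [Fintype ι]

noncomputable def discreteKL (c x : ι → ℝ) : ℝ := ∑ i, x i * log (x i / c i)

lemma mul_log_div_eq {c : ℝ} (hc : 0 < c) (x : ℝ) :
    x * log (x / c) = x * log x - x * log c := by
  rcases eq_or_ne x 0 with rfl | hx
  · simp
  · rw [log_div hx hc.ne', mul_sub]

lemma strictConvexOn_mul_log_div {c : ℝ} (hc : 0 < c) :
    StrictConvexOn ℝ (Set.Ici 0) (fun x => x * log (x / c)) := by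
  simp_rw [mul_log_div_eq hc]
  exact strictConvexOn_mul_log.sub_concaveOn
    (((LinearMap.lsmul ℝ ℝ).flip (log c)).concaveOn (convex_Ici 0))

lemma strictConvexOn_univ_pi_sum {s : ι → Set ℝ} {f : ι → ℝ → ℝ}
    (hf : ∀ i, StrictConvexOn ℝ (s i) (f i)) :
    StrictConvexOn ℝ (Set.univ.pi s) (fun x => ∑ i, f i (x i)) := by
  refine ⟨convex_pi fun i _ => (hf i).1, fun x hx y hy hxy a b ha hb hab => ?_⟩
  obtain ⟨i, hi⟩ := Function.ne_iff.1 hxy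
  simp only [Pi.add_apply, Pi.smul_apply, smul_eq_mul, Finset.mul_sum, ← Finset.sum_add_distrib]
  refine Finset.sum_lt_sum (fun j _ => ?_)
    ⟨i, Finset.mem_univ _, (hf i).2 (hx i trivial) (hy i trivial) hi ha hb hab⟩
  exact (hf j).convexOn.2 (hx j trivial) (hy j trivial) ha.le hb.le hab

variable {c : ι → ℝ}

lemma strictConvexOn_discreteKL (hc : ∀ i, 0 < c i) :
    StrictConvexOn ℝ (Set.Ici 0) (discreteKL c) := by
  rw [← Set.pi_univ_Ici]
  exact strictConvexOn_univ_pi_sum fun i => strictConvexOn_mul_log_div (hc i)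

theorem eq_of_isMinOn_of_discreteKL_le (hc : ∀ i, 0 < c i) {s : Set (ι → ℝ)} (hs : Convex ℝ s)
    (hs0 : s ⊆ Set.Ici 0) {x y : ι → ℝ} (hx : x ∈ s) (hmin : IsMinOn (discreteKL c) s x)
    (hy : y ∈ s) (hyx : discreteKL c y ≤ discreteKL c x) : y = x :=
  ((strictConvexOn_discreteKL hc).subset hs0 hs).eq_of_isMinOn
    (fun _ hz => hyx.trans (hmin hz)) hmin hy hx

lemma continuous_discreteKL (hc : ∀ i, 0 < c i) : Continuous (discreteKL c) := by
  unfold discreteKL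
  simp_rw [mul_log_div_eq (hc _)]
  exact continuous_finsetSum _ fun i _ =>
    (continuous_mul_log.comp (continuous_apply i)).sub ((continuous_apply i).mul continuous_const)

lemma discreteKL_segment_le_of_eq_zero (hc : ∀ i, 0 < c i) {x y : ι → ℝ} (hx : 0 ≤ x)
    (hy : 0 ≤ y) {p : ι} (hxp : x p = 0) (hyp : 0 < y p) {t : ℝ} (ht : t ∈ Set.Ioo 0 1) :
    discreteKL c ((1 - t) • x + t • y) ≤
      (1 - t) * discreteKL c x + t * discreteKL c y + t * y p * log t := by
  classical
  have key : ∀ i, ((1 - t) • x + t • y) i * log (((1 - t) • x + t • y) i / c i) ≤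
      (1 - t) * (x i * log (x i / c i)) + t * (y i * log (y i / c i)) +
        if i = p then t * y p * log t else 0 := by
    intro i
    split_ifs with hi
    · subst hi
      simp only [Pi.add_apply, Pi.smul_apply, smul_eq_mul, hxp, mul_zero, zero_add, zero_mul]
      rw [mul_div_assoc, log_mul ht.1.ne' (div_pos hyp (hc i)).ne']
      exact le_of_eq (by ring)
    · simpa using (strictConvexOn_mul_log_div (hc i)).convexOn.2 (hx i) (hy i)
        (by linarith [ht.2]) ht.1.le (by ring)
  calc _ ≤ _ := Finset.sum_le_sum fun i _ => key i
    _ = _ := by simp [discreteKL, Finset.sum_add_distrib, Finset.mul_sum]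

theorem pos_of_isMinOn_discreteKL (hc : ∀ i, 0 < c i) {s : Set (ι → ℝ)} (hs : Convex ℝ s)
    (hs0 : s ⊆ Set.Ici 0) {x y : ι → ℝ} (hx : x ∈ s) (hmin : IsMinOn (discreteKL c) s x)
    (hy : y ∈ s) {p : ι} (hyp : 0 < y p) : 0 < x p := by
  by_contra hxp
  have hxp : x p = 0 := le_antisymm (not_lt.1 hxp) (hs0 hx p)
  obtain ⟨t, hlog, ht⟩ := ((tendsto_log_nhdsGT_zero.eventually
    (eventually_lt_atBot ((discreteKL c x - discreteKL c y) / y p))).and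
    (Ioo_mem_nhdsGT one_pos)).exists
  have hlog : y p * log t < discreteKL c x - discreteKL c y := by
    rwa [lt_div_iff₀' hyp] at hlog
  have hmin_t : discreteKL c x ≤ discreteKL c ((1 - t) • x + t • y) :=
    hmin (hs hx hy (by linarith [ht.2]) ht.1.le (by ring))
  have hle := discreteKL_segment_le_of_eq_zero hc (hs0 hx) (hs0 hy) hxp hyp ht
  nlinarith [ht.1]

lemma hasDerivAt_mul_log_div_line {c x : ℝ} (hc : 0 < c) (hx : 0 < x) (d : ℝ) :
    HasDerivAt (fun t => (x + t * d) * log ((x + t * d) / c)) (d * (log (x / c) + 1)) 0 := by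
  have hu : HasDerivAt (fun t => x + t * d) d 0 := (hasDerivAt_mul_const d).const_add x
  have hv := (hu.div_const c).log (by simp [hx.ne', hc.ne'])
  refine (hu.fun_mul hv).congr_deriv ?_
  simp only [zero_mul, add_zero]
  field_simp

lemma hasDerivAt_discreteKL_line (hc : ∀ i, 0 < c i) {x : ι → ℝ} (hx : ∀ i, 0 < x i)
    (d : ι → ℝ) :
    HasDerivAt (fun t : ℝ => discreteKL c (x + t • d)) (∑ i, d i * (log (x i / c i) + 1)) 0 :=
  HasDerivAt.fun_sum fun i _ => hasDerivAt_mul_log_div_line (hc i) (hx i) (d i)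

theorem sum_mul_log_div_add_one_eq_zero (hc : ∀ i, 0 < c i) {s : Set (ι → ℝ)}
    {x d : ι → ℝ} (hx : ∀ i, 0 < x i) (hmin : IsMinOn (discreteKL c) s x)
    (hd : ∀ᶠ t : ℝ in 𝓝 0, x + t • d ∈ s) :
    ∑ i, d i * (log (x i / c i) + 1) = 0 := by
  have hloc : IsLocalMin (fun t : ℝ => discreteKL c (x + t • d)) 0 := by
    filter_upwards [hd] with t ht
    simpa using hmin ht
  exact hloc.hasDerivAt_eq_zero (hasDerivAt_discreteKL_line hc hx d)

end DiscreteKL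

section TransportPolytope

variable {m n : Type*} [Fintype m] [Fintype n] {ρ : m → ℝ} {ν : n → ℝ}

def transportPolytope (ρ : m → ℝ) (ν : n → ℝ) : Set (m × n → ℝ) :=
  {x | (∀ i j, 0 ≤ x (i, j)) ∧ (∀ i, ∑ j, x (i, j) = ρ i) ∧ ∀ j, ∑ i, x (i, j) = ν j}

lemma transportPolytope_subset_Ici : transportPolytope ρ ν ⊆ Set.Ici 0 :=
  fun _ hx p => hx.1 p.1 p.2

lemma convex_transportPolytope : Convex ℝ (transportPolytope ρ ν) := by
  rintro x ⟨hx0, hxρ, hxν⟩ y ⟨hy0, hyρ, hyν⟩ a b ha hb hab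
  refine ⟨fun i j => ?_, fun i => ?_, fun j => ?_⟩
  · have := hx0 i j; have := hy0 i j
    simp only [Pi.add_apply, Pi.smul_apply, smul_eq_mul]; positivity
  · simp [Finset.sum_add_distrib, ← Finset.mul_sum, hxρ, hyρ, ← add_mul, hab]
  · simp [Finset.sum_add_distrib, ← Finset.mul_sum, hxν, hyν, ← add_mul, hab]

lemma isCompact_transportPolytope : IsCompact (transportPolytope ρ ν) := by
  refine (isCompact_Icc (a := 0) (b := fun p => ρ p.1)).of_isClosed_subset ?_ ?_
  · simp only [transportPolytope, Set.ofPred_and, Set.ofPred_forall]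
    refine .inter (isClosed_iInter fun i => isClosed_iInter fun j => ?_) (.inter ?_ ?_)
    · exact isClosed_le continuous_const (continuous_apply _)
    · exact isClosed_iInter fun i => isClosed_eq (by fun_prop) continuous_const
    · exact isClosed_iInter fun j => isClosed_eq (by fun_prop) continuous_const
  · rintro x ⟨hx0, hxρ, -⟩
    refine ⟨fun p => hx0 p.1 p.2, fun ⟨i, j⟩ => ?_⟩
    exact (hxρ i).le.trans' (Finset.single_le_sum (fun j _ => hx0 i j) (Finset.mem_univ j))

lemma outer_mem_transportPolytope (hρ : 0 ≤ ρ) (hν : 0 ≤ ν) (hρ1 : ∑ i, ρ i = 1)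
    (hν1 : ∑ j, ν j = 1) : (fun p : m × n => ρ p.1 * ν p.2) ∈ transportPolytope ρ ν :=
  ⟨fun i j => mul_nonneg (hρ i) (hν j), fun i => by simp [← Finset.mul_sum, hν1],
    fun j => by simp [← Finset.sum_mul, hρ1]⟩

lemma eventually_add_smul_mem_transportPolytope {x d : m × n → ℝ}
    (hx : x ∈ transportPolytope ρ ν) (hpos : ∀ p, 0 < x p) (hdρ : ∀ i, ∑ j, d (i, j) = 0)
    (hdν : ∀ j, ∑ i, d (i, j) = 0) : ∀ᶠ t : ℝ in 𝓝 0, x + t • d ∈ transportPolytope ρ ν := by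
  have hnonneg : ∀ᶠ t : ℝ in 𝓝 0, ∀ p, 0 < x p + t * d p := by
    refine eventually_all.2 fun p => Tendsto.eventually_const_lt (hpos p) ?_
    exact Continuous.tendsto' (by fun_prop) _ _ (by simp)
  filter_upwards [hnonneg] with t ht
  refine ⟨fun i j => (ht (i, j)).le, fun i => ?_, fun j => ?_⟩
  · simp [Finset.sum_add_distrib, ← Finset.mul_sum, hx.2.1, hdρ]
  · simp [Finset.sum_add_distrib, ← Finset.mul_sum, hx.2.2, hdν]

variable [DecidableEq m] [DecidableEq n]

theorem log_div_add_log_div_of_isMinOn {c x : m × n → ℝ} (hc : ∀ p, 0 < c p)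
    (hx : x ∈ transportPolytope ρ ν) (hpos : ∀ p, 0 < x p)
    (hmin : IsMinOn (discreteKL c) (transportPolytope ρ ν) x) (i i₀ : m) (j j₀ : n) :
    log (x (i, j) / c (i, j)) + log (x (i₀, j₀) / c (i₀, j₀)) =
      log (x (i, j₀) / c (i, j₀)) + log (x (i₀, j) / c (i₀, j)) := by
  set u : m → ℝ := Pi.single i 1 - Pi.single i₀ 1
  set v : n → ℝ := Pi.single j 1 - Pi.single j₀ 1
  have key := sum_mul_log_div_add_one_eq_zero hc hpos hmin (d := fun p => u p.1 * v p.2)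
    (eventually_add_smul_mem_transportPolytope hx hpos (fun i => by simp [← Finset.mul_sum, v])
      (fun j => by simp [← Finset.sum_mul, u]))
  rw [Fintype.sum_prod_type] at key
  simp only [Pi.sub_apply, Pi.single_apply, sub_mul, ite_mul, one_mul, zero_mul,
    Finset.sum_sub_distrib, Finset.sum_ite_irrel, Finset.sum_ite_eq', Finset.mem_univ,
    ↓reduceIte, add_sub_add_right_eq_sub, Finset.sum_const_zero, u, v] at key
  linarith

end TransportPolytope

lemma exists_mul_mul_of_log_div_add_log_div {m n : Type*} {c x : m × n → ℝ}
    (hc : ∀ p, 0 < c p) (hx : ∀ p, 0 < x p) (i₀ : m) (j₀ : n)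
    (h : ∀ i j, log (x (i, j) / c (i, j)) + log (x (i₀, j₀) / c (i₀, j₀)) =
      log (x (i, j₀) / c (i, j₀)) + log (x (i₀, j) / c (i₀, j))) :
    ∃ (a : m → ℝ) (b : n → ℝ), (∀ i, 0 ≤ a i) ∧ (∀ j, 0 ≤ b j) ∧
      ∀ i j, x (i, j) = a i * b j * c (i, j) := by
  set L : m × n → ℝ := fun p => log (x p / c p)
  refine ⟨fun i => exp (L (i, j₀) - L (i₀, j₀)), fun j => exp (L (i₀, j)),
    fun _ => (exp_pos _).le, fun _ => (exp_pos _).le, fun i j => ?_⟩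
  rw [← exp_add, show L (i, j₀) - L (i₀, j₀) + L (i₀, j) = L (i, j) by linarith [h i j],
    exp_log (div_pos (hx _) (hc _)), div_mul_cancel₀ _ (hc _).ne']

/-- discrete Rüschendorf–Thomsen: For a strictly positive matrix `γbar`
and strictly positive probability vectors `ρ`, `ν`, there is a unique minimizer `γ*` of
`KL(·|γbar)` over nonnegative matrices with row sums `ρ` and column sums `ν`, and `γ*`
has the product form `γ*ᵢⱼ = aᵢ bⱼ γbarᵢⱼ` for some nonnegative vectors `a`, `b`. -/
theorem kl_projection_product_form
    (M : ℕ) (hM : 1 ≤ M)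
    (γbar : Fin M → Fin M → ℝ) (hγbar : ∀ i j, 0 < γbar i j)
    (ρ ν : Fin M → ℝ) (hρ : ∀ i, 0 < ρ i) (hν : ∀ j, 0 < ν j)
    (hρ1 : ∑ i, ρ i = 1) (hν1 : ∑ j, ν j = 1)
    (S : Set (Fin M → Fin M → ℝ))
    (hS : S = {γ | (∀ i j, 0 ≤ γ i j) ∧ (∀ i, ∑ j, γ i j = ρ i) ∧
      (∀ j, ∑ i, γ i j = ν j)})
    (KL : (Fin M → Fin M → ℝ) → ℝ)
    (hKL : KL = fun γ => ∑ i, ∑ j, γ i j * Real.log (γ i j / γbar i j)) :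
    ∃ γstar ∈ S,
      (∀ γ ∈ S, KL γstar ≤ KL γ) ∧
      (∀ γ ∈ S, KL γ ≤ KL γstar → γ = γstar) ∧
      ∃ a b : Fin M → ℝ, (∀ i, 0 ≤ a i) ∧ (∀ j, 0 ≤ b j) ∧
        ∀ i j, γstar i j = a i * b j * γbar i j := by
  set T := transportPolytope ρ ν
  have hc : ∀ p, 0 < uncurry γbar p := fun p => hγbar p.1 p.2
  have hST : ∀ γ, γ ∈ S ↔ uncurry γ ∈ T := fun γ => by rw [hS]; rfl
  have hKL' : ∀ γ, KL γ = discreteKL (uncurry γbar) (uncurry γ) := fun γ => by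
    rw [hKL, discreteKL, Fintype.sum_prod_type]; rfl
  have hπ := outer_mem_transportPolytope (fun i => (hρ i).le) (fun j => (hν j).le) hρ1 hν1
  obtain ⟨x, hxT, hmin⟩ :=
    isCompact_transportPolytope.exists_isMinOn ⟨_, hπ⟩ (continuous_discreteKL hc).continuousOn
  have hpos : ∀ p, 0 < x p := fun p => pos_of_isMinOn_discreteKL hc convex_transportPolytope
    transportPolytope_subset_Ici hxT hmin hπ (mul_pos (hρ p.1) (hν p.2))
  have i₀ : Fin M := ⟨0, hM⟩
  obtain ⟨a, b, ha, hb, hab⟩ := exists_mul_mul_of_log_div_add_log_div hc hpos i₀ i₀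
    (log_div_add_log_div_of_isMinOn hc hxT hpos hmin · i₀ · i₀)
  refine ⟨curry x, (hST _).2 (by rwa [uncurry_curry]), fun γ hγ => ?_, fun γ hγ hle => ?_,
    a, b, ha, hb, hab⟩
  · rw [hKL', hKL', uncurry_curry]
    exact hmin ((hST γ).1 hγ)
  · rw [hKL', hKL', uncurry_curry] at hle
    rw [← curry_uncurry γ, eq_of_isMinOn_of_discreteKL_le hc convex_transportPolytope
      transportPolytope_subset_Ici hxT hmin ((hST γ).1 hγ) hle]
end

section
/- Let M, N ≥ 1, let γ̄ ∈ ℝ_{>0}^{(M)^N} be a tensor with strictly positive entries, and let ρ ∈ ℝ_{>0}^M with ∑_j ρ_j = 1. For i = 1,...,N let C_i be the set of nonnegative tensors whose i-th marginal equals ρ, and extend the indexing N-periodically (C_{n+N} = C_n). Define γ^0 = γ̄ and γ^n = P^{KL}_{C_n}(γ^{n-1}) for n ≥ 1, where P^{KL}_{C_i} denotes the Kullback–Leibler projection onto C_i. Then the sequence γ^n converges, as n → ∞, to P^{KL}_{∩_{i=1}^N C_i}(γ̄), the Kullback–Leibler projection of γ̄ onto the intersection C = ∩_{i=1}^N C_i.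 -/
open Real in
lemma kl_term_ineq {x y : ℝ} (hx : 0 ≤ x) (hx1 : x ≤ 1) (hy : 0 < y) (hy1 : y ≤ 1) :
    x - y + (x - y)^2 / 4 ≤ x * Real.log (x / y) := by
  rcases eq_or_lt_of_le hx with h0 | hxpos
  · rw [← h0]; simp; nlinarith
  · set a := Real.sqrt x with ha
    set b := Real.sqrt y with hb
    have hax : a ^ 2 = x := Real.sq_sqrt hx
    have hbx : b ^ 2 = y := Real.sq_sqrt hy.le
    have hapos : 0 < a := Real.sqrt_pos.2 hxpos
    have hbpos : 0 < b := Real.sqrt_pos.2 hy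
    have ha1 : a ≤ 1 := by rw [ha]; simpa using Real.sqrt_le_sqrt hx1
    have hb1 : b ≤ 1 := by rw [hb]; simpa using Real.sqrt_le_sqrt hy1
    have hdiv : x / y = (a / b) ^ 2 := by rw [div_pow, hax, hbx]
    have hlog : Real.log (x / y) = 2 * Real.log (a / b) := by
      rw [hdiv, ← Real.rpow_natCast (a/b) 2]
      rw [Real.log_rpow (by positivity)]
      norm_num
    have hlb : 1 - b / a ≤ Real.log (a / b) := by
      have := Real.log_le_sub_one_of_pos (x := b / a) (by positivity)
      have hinv : Real.log (a / b) = - Real.log (b / a) := by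
        rw [← Real.log_inv]; congr 1; field_simp
      rw [hinv]; linarith
    have hkey : 2 * a ^ 2 - 2 * a * b ≤ x * Real.log (x / y) := by
      rw [hlog, ← hax]
      have h2 : 2 * a ^ 2 * (1 - b / a) ≤ 2 * a ^ 2 * Real.log (a / b) := by
        apply mul_le_mul_of_nonneg_left hlb (by positivity)
      calc 2 * a ^ 2 - 2 * a * b = 2 * a ^ 2 * (1 - b / a) := by field_simp
        _ ≤ 2 * a ^ 2 * Real.log (a / b) := h2
        _ = a ^ 2 * (2 * Real.log (a / b)) := by ring
    have hfin : x - y + (x - y)^2/4 ≤ 2 * a^2 - 2*a*b := by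
      rw [← hax, ← hbx]
      nlinarith [sq_nonneg (a - b), sq_nonneg (a + b), mul_pos hapos hbpos,
        mul_nonneg (sq_nonneg (a-b)) (mul_nonneg hapos.le hbpos.le)]
    linarith

lemma kl_sum_ineq {ι : Type*} [Fintype ι] {x y : ι → ℝ}
    (hx : ∀ j, 0 ≤ x j) (hx1 : ∀ j, x j ≤ 1) (hy : ∀ j, 0 < y j) (hy1 : ∀ j, y j ≤ 1)
    (hs : ∑ j, x j = ∑ j, y j) :
    (∑ j, (x j - y j)^2) / 4 ≤ ∑ j, x j * Real.log (x j / y j) := by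
  have h : ∑ j, (x j - y j + (x j - y j)^2/4) ≤ ∑ j, x j * Real.log (x j / y j) :=
    Finset.sum_le_sum fun j _ => kl_term_ineq (hx j) (hx1 j) (hy j) (hy1 j)
  calc (∑ j, (x j - y j)^2) / 4 = ∑ j, (x j - y j + (x j - y j)^2/4) := by
        rw [Finset.sum_add_distrib, Finset.sum_sub_distrib, hs]
        simp [Finset.sum_div]
    _ ≤ _ := h

section marg
variable {M N : ℕ}

noncomputable def marg (i : Fin N) (β : (Fin N → Fin M) → ℝ) (m : Fin M) : ℝ :=
  ∑ j ∈ Finset.univ.filter (fun j : Fin N → Fin M => j i = m), β j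

noncomputable def scal (ρ : Fin M → ℝ) (i : Fin N) (β : (Fin N → Fin M) → ℝ)
    (j : Fin N → Fin M) : ℝ := β j * (ρ (j i) / marg i β (j i))

lemma sum_mul_comp (i : Fin N) (β : (Fin N → Fin M) → ℝ) (F : Fin M → ℝ) :
    ∑ j, β j * F (j i) = ∑ m, marg i β m * F m := by
  rw [← Finset.sum_fiberwise Finset.univ (fun j : Fin N → Fin M => j i)
    (fun j => β j * F (j i))]
  refine Finset.sum_congr rfl fun m _ => ?_
  rw [marg, Finset.sum_mul]
  exact Finset.sum_congr rfl fun j hj => by rw [(Finset.mem_filter.1 hj).2]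

lemma marg_pos {β : (Fin N → Fin M) → ℝ} (hβ : ∀ j, 0 < β j) (i : Fin N) (m : Fin M) :
    0 < marg i β m :=
  Finset.sum_pos (fun j _ => hβ j) ⟨fun _ => m, by simp⟩

lemma marg_scal {ρ : Fin M → ℝ} {β : (Fin N → Fin M) → ℝ} (hβ : ∀ j, 0 < β j)
    (i : Fin N) (m : Fin M) : marg i (scal ρ i β) m = ρ m := by
  have hm := (marg_pos hβ i m).ne'
  rw [marg]
  have : ∀ j ∈ Finset.univ.filter (fun j : Fin N → Fin M => j i = m),
      scal ρ i β j = β j * (ρ m / marg i β m) := fun j hj => by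
    rw [scal, (Finset.mem_filter.1 hj).2]
  rw [Finset.sum_congr rfl this, ← Finset.sum_mul, ← marg]
  field_simp

lemma scal_sum {ρ : Fin M → ℝ} {β : (Fin N → Fin M) → ℝ} (hβ : ∀ j, 0 < β j)
    (hρ1 : ∑ m, ρ m = 1) (i : Fin N) : ∑ j, scal ρ i β j = 1 := by
  unfold scal
  rw [sum_mul_comp i β (fun m => ρ m / marg i β m), ← hρ1]
  refine Finset.sum_congr rfl fun m _ => ?_
  field_simp [(marg_pos hβ i m).ne']

lemma scal_pos {ρ : Fin M → ℝ} {β : (Fin N → Fin M) → ℝ} (hβ : ∀ j, 0 < β j)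
    (hρ : ∀ m, 0 < ρ m) (i : Fin N) (j : Fin N → Fin M) : 0 < scal ρ i β j := by
  have := marg_pos hβ i (j i); have := hβ j; have := hρ (j i)
  rw [scal]; positivity

lemma pyth {ρ : Fin M → ℝ} {β γ : (Fin N → Fin M) → ℝ} (hβ : ∀ j, 0 < β j)
    (hρ : ∀ m, 0 < ρ m) (hγ : ∀ j, 0 ≤ γ j) (i : Fin N)
    (hmarg : ∀ m, marg i γ m = ρ m) :
    ∑ j, γ j * Real.log (γ j / β j) =
      ∑ j, γ j * Real.log (γ j / scal ρ i β j) +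
      ∑ j, scal ρ i β j * Real.log (scal ρ i β j / β j) := by
  set F : Fin M → ℝ := fun m => Real.log (ρ m) - Real.log (marg i β m) with hF
  have hmp : ∀ m, 0 < marg i β m := marg_pos hβ i
  have hsp : ∀ j, 0 < scal ρ i β j := scal_pos hβ hρ i
  have hlogscal : ∀ j, Real.log (scal ρ i β j) = Real.log (β j) + F (j i) := by
    intro j
    rw [scal, Real.log_mul (hβ j).ne' (div_pos (hρ (j i)) (hmp (j i))).ne',
      Real.log_div (hρ (j i)).ne' (hmp (j i)).ne']
  have claim1 : ∀ j, scal ρ i β j * Real.log (scal ρ i β j / β j)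
      = scal ρ i β j * F (j i) := by
    intro j
    rw [Real.log_div (hsp j).ne' (hβ j).ne', hlogscal j]; ring
  have claim2 : ∀ j, γ j * Real.log (γ j / β j) - γ j * Real.log (γ j / scal ρ i β j)
      = γ j * F (j i) := by
    intro j
    rcases eq_or_lt_of_le (hγ j) with h0 | hpos
    · rw [← h0]; ring
    · rw [Real.log_div hpos.ne' (hβ j).ne', Real.log_div hpos.ne' (hsp j).ne',
        hlogscal j]; ring
  have e1 : ∑ j, γ j * Real.log (γ j / β j) - ∑ j, γ j * Real.log (γ j / scal ρ i β j)
      = ∑ m, ρ m * F m := by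
    rw [← Finset.sum_sub_distrib, Finset.sum_congr rfl fun j _ => claim2 j,
      sum_mul_comp i γ F]
    exact Finset.sum_congr rfl fun m _ => by rw [hmarg m]
  have e2 : ∑ j, scal ρ i β j * Real.log (scal ρ i β j / β j) = ∑ m, ρ m * F m := by
    rw [Finset.sum_congr rfl fun j _ => claim1 j, sum_mul_comp i (scal ρ i β) F]
    exact Finset.sum_congr rfl fun m _ => by rw [marg_scal hβ i m]
  linarith

lemma prod_marg {ρ : Fin M → ℝ} (hρ1 : ∑ m, ρ m = 1) (i : Fin N) (m : Fin M) :
    marg i (fun j => ∏ i', ρ (j i')) m = ρ m := by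
  classical
  set f : Fin N → Fin M → ℝ := fun i' x => if i' = i ∧ x ≠ m then 0 else ρ x with hf
  rw [marg, Finset.sum_filter]
  have step1 : ∀ j : Fin N → Fin M,
      (if j i = m then ∏ i', ρ (j i') else 0) = ∏ i', f i' (j i') := by
    intro j
    by_cases h : j i = m
    · rw [if_pos h]
      refine Finset.prod_congr rfl fun i' _ => ?_
      by_cases hi : i' = i
      · subst hi; simp [hf, h]
      · simp [hf, hi]
    · rw [if_neg h]
      exact (Finset.prod_eq_zero (Finset.mem_univ i) (by simp [hf, h])).symm
  rw [Finset.sum_congr rfl fun j _ => step1 j, ← Fintype.prod_sum f]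
  have step3 : ∀ i' : Fin N, (∑ x, f i' x) = if i' = i then ρ m else 1 := by
    intro i'
    by_cases hi : i' = i
    · subst hi
      rw [if_pos rfl]
      have : ∀ x : Fin M, f i' x = if x = m then ρ x else 0 := by
        intro x; by_cases hx : x = m <;> simp [hf, hx]
      rw [Finset.sum_congr rfl fun x _ => this x]
      simp
    · rw [if_neg hi]
      have : ∀ x : Fin M, f i' x = ρ x := fun x => by simp [hf, hi]
      rw [Finset.sum_congr rfl fun x _ => this x, hρ1]
  rw [Finset.prod_congr rfl fun i' _ => step3 i']
  simp

end marg

/-- convergence of iterative Bregman projections: Starting from a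
strictly positive tensor `γbar` and alternately applying, `N`-periodically, the
Kullback–Leibler projections onto the marginal constraint sets `Cᵢ`, the resulting
sequence converges to the KL projection of `γbar` onto the intersection `⋂ᵢ Cᵢ`. -/
theorem bregman_iterates_converge
    (M N : ℕ) (hM : 1 ≤ M) (hN : 1 ≤ N)
    (γbar : (Fin N → Fin M) → ℝ) (hγbar : ∀ j, 0 < γbar j)
    (ρ : Fin M → ℝ) (hρ : ∀ m, 0 < ρ m) (hρ1 : ∑ m, ρ m = 1)
    (C : Fin N → Set ((Fin N → Fin M) → ℝ))
    (hC : C = fun i => {γ | (∀ j, 0 ≤ γ j) ∧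
      ∀ m : Fin M,
        ∑ j ∈ Finset.univ.filter (fun j : Fin N → Fin M => j i = m), γ j = ρ m})
    (KL : ((Fin N → Fin M) → ℝ) → ((Fin N → Fin M) → ℝ) → ℝ)
    (hKL : KL = fun γ β => ∑ j, γ j * Real.log (γ j / β j))
    (g : ℕ → (Fin N → Fin M) → ℝ)
    (hg0 : g 0 = γbar)
    (hgproj : ∀ n : ℕ,
      g (n + 1) ∈ C ⟨n % N, Nat.mod_lt n (by omega)⟩ ∧
      ∀ γ' ∈ C ⟨n % N, Nat.mod_lt n (by omega)⟩, KL (g (n + 1)) (g n) ≤ KL γ' (g n)) :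
    ∃ glim : (Fin N → Fin M) → ℝ,
      glim ∈ ⋂ i, C i ∧
      (∀ γ' ∈ ⋂ i, C i, KL glim γbar ≤ KL γ' γbar) ∧
      Filter.Tendsto g Filter.atTop (nhds glim) := by
  classical
  have N0 : 0 < N := hN
  have i₀ : Fin N := ⟨0, N0⟩
  have hKLdef : ∀ γ β : (Fin N → Fin M) → ℝ,
      KL γ β = ∑ j, γ j * Real.log (γ j / β j) := by
    subst hKL; exact fun _ _ => rfl
  have hCmem : ∀ (i : Fin N) (γ : (Fin N → Fin M) → ℝ),
      γ ∈ C i ↔ ((∀ j, 0 ≤ γ j) ∧ ∀ m, marg i γ m = ρ m) := by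
    subst hC; exact fun i γ => Iff.rfl
  have hρle1 : ∀ m, ρ m ≤ 1 := fun m => by
    rw [← hρ1]
    exact Finset.single_le_sum (fun m _ => (hρ m).le) (Finset.mem_univ m)
  have hCfacts : ∀ (i : Fin N) (γ : (Fin N → Fin M) → ℝ), γ ∈ C i →
      (∑ j, γ j = 1) ∧ (∀ j, γ j ≤ 1) := by
    intro i γ hγ
    obtain ⟨h0, hm⟩ := (hCmem i γ).1 hγ
    have hsum : ∑ j, γ j = 1 := by
      rw [← Finset.sum_fiberwise Finset.univ (fun j : Fin N → Fin M => j i) γ]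
      rw [← hρ1]
      exact Finset.sum_congr rfl fun m _ => hm m
    refine ⟨hsum, fun j => ?_⟩
    rw [← hsum]
    exact Finset.single_le_sum (fun j _ => h0 j) (Finset.mem_univ j)
  -- canonical versions of the projection hypotheses
  have hgmem : ∀ n : ℕ, g (n+1) ∈ C ⟨n % N, Nat.mod_lt n N0⟩ := fun n => (hgproj n).1
  have hgmin : ∀ n : ℕ, ∀ γ' ∈ C ⟨n % N, Nat.mod_lt n N0⟩,
      KL (g (n+1)) (g n) ≤ KL γ' (g n) := fun n => (hgproj n).2
  -- the iterates are given by the explicit scaling map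
  have hid : ∀ n : ℕ, (∀ j, 0 < g n j) →
      g (n+1) = scal ρ ⟨n % N, Nat.mod_lt n N0⟩ (g n) := by
    intro n hp
    set i : Fin N := ⟨n % N, Nat.mod_lt n N0⟩ with hi
    have hsC : scal ρ i (g n) ∈ C i :=
      (hCmem i _).2 ⟨fun j => (scal_pos hp hρ i j).le, marg_scal hp i⟩
    have hle := hgmin n _ hsC
    obtain ⟨hg1pos, hg1m⟩ := (hCmem i _).1 (hgmem n)
    have hpy := pyth (β := g n) (γ := g (n+1)) hp hρ hg1pos i hg1m
    rw [hKLdef, hKLdef] at hle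
    have hKL0 : ∑ j, g (n+1) j * Real.log (g (n+1) j / scal ρ i (g n) j) ≤ 0 := by
      linarith
    have hsums : ∑ j, g (n+1) j = ∑ j, scal ρ i (g n) j := by
      rw [(hCfacts i _ (hgmem n)).1, scal_sum hp hρ1 i]
    have hPk := kl_sum_ineq (x := g (n+1)) (y := scal ρ i (g n)) hg1pos
      (hCfacts i _ (hgmem n)).2 (scal_pos hp hρ i) (hCfacts i _ hsC).2 hsums
    have hsq : ∑ j, (g (n+1) j - scal ρ i (g n) j)^2 ≤ 0 := by linarith
    have hz := (Finset.sum_eq_zero_iff_of_nonneg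
      (fun j _ => sq_nonneg (g (n+1) j - scal ρ i (g n) j))).1
      (le_antisymm hsq (Finset.sum_nonneg fun j _ => sq_nonneg _))
    funext j
    have := hz j (Finset.mem_univ j)
    have : g (n+1) j - scal ρ i (g n) j = 0 := by
      have := sq_eq_zero_iff.1 this; exact this
    linarith
  have hposall : ∀ n, ∀ j, 0 < g n j := by
    intro n
    induction n with
    | zero => simpa [hg0] using hγbar
    | succ n ih =>
      rw [hid n ih]
      exact scal_pos ih hρ _
  have hgid : ∀ n : ℕ, g (n+1) = scal ρ ⟨n % N, Nat.mod_lt n N0⟩ (g n) :=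
    fun n => hid n (hposall n)
  have hsum1 : ∀ n, ∑ j, g (n+1) j = 1 := fun n => (hCfacts _ _ (hgmem n)).1
  have hle1 : ∀ n j, g (n+1) j ≤ 1 := fun n => (hCfacts _ _ (hgmem n)).2
  -- the Pythagorean step identity
  have hstepC : ∀ n : ℕ, ∀ γ ∈ C ⟨n % N, Nat.mod_lt n N0⟩,
      KL γ (g n) = KL γ (g (n+1)) + KL (g (n+1)) (g n) := by
    intro n γ hγ
    obtain ⟨hγ0, hγm⟩ := (hCmem _ _).1 hγ
    have hpy := pyth (β := g n) (γ := γ) (hposall n) hρ hγ0 _ hγm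
    rw [hKLdef γ (g n), hKLdef γ (g (n+1)), hKLdef (g (n+1)) (g n), hgid n]
    exact hpy
  have hstepΓ : ∀ γ ∈ ⋂ i, C i, ∀ n : ℕ,
      KL γ (g n) = KL γ (g (n+1)) + KL (g (n+1)) (g n) :=
    fun γ hγ n => hstepC n γ (Set.mem_iInter.1 hγ _)
  -- generic nonnegativity of KL against the iterates
  have hKLnn : ∀ (x : (Fin N → Fin M) → ℝ) (n : ℕ), (∀ j, 0 ≤ x j) → (∀ j, x j ≤ 1) →
      (∑ j, x j = 1) → 0 ≤ KL x (g (n+1)) := by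
    intro x n hx0 hx1 hxs
    have := kl_sum_ineq (x := x) (y := g (n+1)) hx0 hx1 (hposall (n+1)) (hle1 n)
      (by rw [hxs, hsum1 n])
    have h2 : (0:ℝ) ≤ (∑ j, (x j - g (n+1) j)^2) / 4 := by positivity
    rw [hKLdef]
    linarith
  have hdnn : ∀ n : ℕ, 0 ≤ KL (g (n+2)) (g (n+1)) := fun n =>
    hKLnn (g (n+2)) n (fun j => (hposall (n+2) j).le) (hle1 (n+1)) (hsum1 (n+1))
  -- the product tensor lies in the intersection
  have hγ₀mem : (fun j : Fin N → Fin M => ∏ i', ρ (j i')) ∈ ⋂ i, C i :=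
    Set.mem_iInter.2 fun i => (hCmem i _).2
      ⟨fun j => Finset.prod_nonneg fun i' _ => (hρ (j i')).le, prod_marg hρ1 i⟩
  have hγ₀0 : ∀ j : Fin N → Fin M, 0 ≤ ∏ i', ρ (j i') :=
    fun j => Finset.prod_nonneg fun i' _ => (hρ (j i')).le
  -- convergence of the defect d n = KL (g (n+2)) (g (n+1)) to 0
  have htnn : ∀ n : ℕ, 0 ≤ KL (fun j : Fin N → Fin M => ∏ i', ρ (j i')) (g (n+1)) :=
    fun n => hKLnn _ n hγ₀0 (hCfacts i₀ _ (Set.mem_iInter.1 hγ₀mem i₀)).2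
      (hCfacts i₀ _ (Set.mem_iInter.1 hγ₀mem i₀)).1
  have htanti : Antitone (fun n => KL (fun j : Fin N → Fin M => ∏ i', ρ (j i')) (g (n+1))) := by
    apply antitone_nat_of_succ_le
    intro n
    have := hstepΓ _ hγ₀mem (n+1)
    have h2 := hdnn n
    show KL _ (g (n+1+1)) ≤ KL _ (g (n+1))
    linarith
  have htlim := tendsto_atTop_ciInf htanti
    ⟨0, by rintro x ⟨n, rfl⟩; exact htnn n⟩
  have hdtend : Filter.Tendsto (fun n => KL (g (n+2)) (g (n+1))) Filter.atTop (nhds 0) := by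
    have heq : (fun n => KL (g (n+2)) (g (n+1))) =
        fun n => (fun k => KL (fun j : Fin N → Fin M => ∏ i', ρ (j i')) (g (k+1))) n
          - (fun k => KL (fun j : Fin N → Fin M => ∏ i', ρ (j i')) (g (k+1))) (n+1) := by
      funext n
      have := hstepΓ _ hγ₀mem (n+1)
      show KL (g (n+2)) (g (n+1)) = KL _ (g (n+1)) - KL _ (g (n+1+1))
      linarith
    rw [heq]
    have h2 := htlim.sub (htlim.comp (Filter.tendsto_add_atTop_nat 1))
    simpa using h2
  -- consecutive iterates get close
  have hqbound : ∀ n : ℕ, (∑ j, (g (n+2) j - g (n+1) j)^2) ≤ 4 * KL (g (n+2)) (g (n+1)) := by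
    intro n
    have := kl_sum_ineq (x := g (n+2)) (y := g (n+1))
      (fun j => (hposall (n+2) j).le) (hle1 (n+1)) (hposall (n+1)) (hle1 n)
      (by rw [hsum1 (n+1), hsum1 n])
    rw [hKLdef]
    linarith
  have hqtend : Filter.Tendsto (fun n => ∑ j, (g (n+2) j - g (n+1) j)^2)
      Filter.atTop (nhds 0) := by
    apply tendsto_of_tendsto_of_tendsto_of_le_of_le (tendsto_const_nhds (x := (0:ℝ)))
      (by simpa using hdtend.const_mul 4)
    · intro n; positivity
    · exact hqbound
  have hDtend : Filter.Tendsto (fun n => dist (g (n+2)) (g (n+1))) Filter.atTop (nhds 0) := by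
    apply tendsto_of_tendsto_of_tendsto_of_le_of_le (tendsto_const_nhds (x := (0:ℝ)))
      (by simpa using ((Real.continuous_sqrt.tendsto 0).comp hqtend))
    · intro n; exact dist_nonneg
    · intro n
      show dist (g (n+2)) (g (n+1)) ≤ Real.sqrt (∑ j, (g (n+2) j - g (n+1) j)^2)
      rw [dist_pi_le_iff (Real.sqrt_nonneg _)]
      intro j
      rw [Real.dist_eq]
      have h1 : (g (n+2) j - g (n+1) j)^2 ≤ ∑ j, (g (n+2) j - g (n+1) j)^2 :=
        Finset.single_le_sum (f := fun j => (g (n+2) j - g (n+1) j)^2)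
          (fun j _ => sq_nonneg _) (Finset.mem_univ j)
      calc |g (n+2) j - g (n+1) j| = Real.sqrt ((g (n+2) j - g (n+1) j)^2) :=
            (Real.sqrt_sq_eq_abs _).symm
        _ ≤ _ := Real.sqrt_le_sqrt h1
  -- extract a convergent subsequence
  have hcpt : IsCompact (Set.Icc (0 : (Fin N → Fin M) → ℝ) 1) := isCompact_Icc
  have hmemIcc : ∀ n : ℕ, g (n+1) ∈ Set.Icc (0 : (Fin N → Fin M) → ℝ) 1 := by
    intro n
    refine Set.mem_Icc.2 ⟨fun j => (hposall (n+1) j).le, fun j => hle1 n j⟩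
  obtain ⟨h, hhK, φ, hφ, hφt⟩ := hcpt.tendsto_subseq (x := fun n => g (n+1)) hmemIcc
  have hφt' : Filter.Tendsto (fun k => g (φ k + 1)) Filter.atTop (nhds h) := hφt
  -- the constraint sets are closed
  have hclosed : ∀ i : Fin N, IsClosed (C i) := by
    intro i
    simp only [hC]
    rw [Set.setOf_and]
    refine IsClosed.inter ?_ ?_
    · rw [Set.setOf_forall]
      exact isClosed_iInter fun j => isClosed_le continuous_const (continuous_apply j)
    · rw [Set.setOf_forall]
      exact isClosed_iInter fun m => isClosed_eq
        (continuous_finset_sum _ fun j _ => continuous_apply j) continuous_const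
  -- the limit point belongs to every constraint set
  have hmemC : ∀ i : Fin N, h ∈ C i := by
    intro i
    set r : ℕ → ℕ := fun k => ((i : ℕ) + N - φ k % N) % N with hr
    have hrlt : ∀ k, r k < N := fun k => Nat.mod_lt _ N0
    have hrmod : ∀ k : ℕ, (φ k + r k) % N = (i : ℕ) := by
      intro k
      have ha : φ k % N < N := Nat.mod_lt _ N0
      have e1 : (φ k + ((i : ℕ) + N - φ k % N) % N) % N
          = (φ k + ((i : ℕ) + N - φ k % N)) % N :=
        Nat.ModEq.add_left (φ k) (Nat.mod_modEq _ N)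
      have e2 : φ k + ((i : ℕ) + N - φ k % N) = (i : ℕ) + N * (φ k / N + 1) := by
        have hdm := Nat.div_add_mod (φ k) N
        rw [Nat.mul_add, Nat.mul_one]
        omega
      rw [hr]
      rw [e1, e2, Nat.add_mul_mod_self_left, Nat.mod_eq_of_lt i.isLt]
    have hvC : ∀ k, g (φ k + r k + 1) ∈ C i := by
      intro k
      have hmm := hgmem (φ k + r k)
      have he : (⟨(φ k + r k) % N, Nat.mod_lt (φ k + r k) N0⟩ : Fin N) = i :=
        Fin.ext (hrmod k)
      rwa [he] at hmm
    have hW : Filter.Tendsto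
        (fun k => ∑ s ∈ Finset.range N, dist (g (φ k + s + 1 + 1)) (g (φ k + s + 1)))
        Filter.atTop (nhds 0) := by
      have hterm : ∀ s ∈ Finset.range N, Filter.Tendsto
          (fun k => dist (g (φ k + s + 1 + 1)) (g (φ k + s + 1)))
          Filter.atTop (nhds 0) := by
        intro s _
        have hsles : Filter.Tendsto (fun k => φ k + s) Filter.atTop Filter.atTop :=
          Filter.tendsto_atTop_mono (fun k => Nat.le_add_right (φ k) s)
            hφ.tendsto_atTop
        exact hDtend.comp hsles
      have := tendsto_finset_sum (Finset.range N) hterm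
      simpa using this
    have hvt : Filter.Tendsto (fun k => g (φ k + r k + 1)) Filter.atTop (nhds h) := by
      rw [tendsto_iff_dist_tendsto_zero]
      apply tendsto_of_tendsto_of_tendsto_of_le_of_le (tendsto_const_nhds (x := (0:ℝ)))
        (by simpa using hW.add (tendsto_iff_dist_tendsto_zero.1 hφt'))
      · intro k; exact dist_nonneg
      · intro k
        show dist (g (φ k + r k + 1)) h ≤
          (∑ s ∈ Finset.range N, dist (g (φ k + s + 1 + 1)) (g (φ k + s + 1)))
            + dist (g (φ k + 1)) h
        have hd' : dist (g (φ k + 1)) (g (φ k + r k + 1)) ≤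
            ∑ s ∈ Finset.range (r k), dist (g (φ k + s + 1)) (g (φ k + s + 1 + 1)) :=
          dist_le_range_sum_dist (fun s => g (φ k + s + 1)) (r k)
        have hflip : ∑ s ∈ Finset.range (r k), dist (g (φ k + s + 1)) (g (φ k + s + 1 + 1))
            = ∑ s ∈ Finset.range (r k), dist (g (φ k + s + 1 + 1)) (g (φ k + s + 1)) :=
          Finset.sum_congr rfl fun s _ => dist_comm _ _
        have hsub : ∑ s ∈ Finset.range (r k), dist (g (φ k + s + 1 + 1)) (g (φ k + s + 1))
            ≤ ∑ s ∈ Finset.range N, dist (g (φ k + s + 1 + 1)) (g (φ k + s + 1)) :=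
          Finset.sum_le_sum_of_subset_of_nonneg
            (Finset.range_subset_range.2 (hrlt k).le) (fun _ _ _ => dist_nonneg)
        have hd'' : dist (g (φ k + r k + 1)) (g (φ k + 1)) ≤
            ∑ s ∈ Finset.range N, dist (g (φ k + s + 1 + 1)) (g (φ k + s + 1)) := by
          rw [dist_comm]
          exact hd'.trans (le_of_eq_of_le hflip hsub)
        calc dist (g (φ k + r k + 1)) h
            ≤ dist (g (φ k + r k + 1)) (g (φ k + 1)) + dist (g (φ k + 1)) h :=
              dist_triangle _ _ _
          _ ≤ _ := add_le_add hd'' le_rfl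
    exact (hclosed i).mem_of_tendsto hvt (Filter.Eventually.of_forall hvC)
  have hhΓ : h ∈ ⋂ i, C i := Set.mem_iInter.2 hmemC
  have hh0 : ∀ j, 0 ≤ h j := ((hCmem i₀ h).1 (hmemC i₀)).1
  have hhs : ∑ j, h j = 1 := (hCfacts i₀ h (hmemC i₀)).1
  have hhle1 : ∀ j, h j ≤ 1 := (hCfacts i₀ h (hmemC i₀)).2
  -- KL h (g (φ k + 1)) → 0 along the subsequence, by continuity
  have hasub : Filter.Tendsto (fun k => KL h (g (φ k + 1))) Filter.atTop (nhds 0) := by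
    simp only [hKLdef]
    have hterm : ∀ j ∈ Finset.univ, Filter.Tendsto
        (fun k => h j * Real.log (h j / g (φ k + 1) j)) Filter.atTop (nhds 0) := by
      intro j _
      rcases eq_or_lt_of_le (hh0 j) with h0 | hjpos
      · simp only [← h0, zero_mul]
        exact tendsto_const_nhds
      · have hgj : Filter.Tendsto (fun k => g (φ k + 1) j) Filter.atTop (nhds (h j)) :=
          ((continuous_apply j).tendsto h).comp hφt'
        have hdivt : Filter.Tendsto (fun k => h j / g (φ k + 1) j) Filter.atTop
            (nhds 1) := by
          have := (tendsto_const_nhds (x := h j)).div hgj hjpos.ne'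
          rwa [div_self hjpos.ne'] at this
        have hlogt : Filter.Tendsto (fun k => Real.log (h j / g (φ k + 1) j))
            Filter.atTop (nhds 0) := by
          have := (Real.continuousAt_log one_ne_zero).tendsto.comp hdivt
          rw [Real.log_one] at this; exact this
        have := (tendsto_const_nhds (x := h j)).mul hlogt
        simpa using this
    have := tendsto_finset_sum Finset.univ hterm
    simpa using this
  -- KL h (g (n+1)) is antitone and nonnegative, so it converges to 0
  have hanti : Antitone (fun n => KL h (g (n+1))) := by
    apply antitone_nat_of_succ_le
    intro n
    have := hstepΓ h hhΓ (n+1)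
    have h2 := hdnn n
    show KL h (g (n+1+1)) ≤ KL h (g (n+1))
    linarith
  have hann : ∀ n, 0 ≤ KL h (g (n+1)) := fun n => hKLnn h n hh0 hhle1 hhs
  have halim := tendsto_atTop_ciInf hanti ⟨0, by rintro x ⟨n, rfl⟩; exact hann n⟩
  have hiinf0 : (⨅ n, KL h (g (n+1))) = 0 := by
    have hcomp : Filter.Tendsto (fun k => KL h (g (φ k + 1))) Filter.atTop
        (nhds (⨅ n, KL h (g (n+1)))) := halim.comp hφ.tendsto_atTop
    exact tendsto_nhds_unique hcomp hasub
  have hatend : Filter.Tendsto (fun n => KL h (g (n+1))) Filter.atTop (nhds 0) := by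
    rw [← hiinf0]; exact halim
  -- the full sequence converges to h
  have htend1 : Filter.Tendsto (fun n => g (n+1)) Filter.atTop (nhds h) := by
    rw [tendsto_iff_dist_tendsto_zero]
    have hsq4 : ∀ n, ∑ j, (h j - g (n+1) j)^2 ≤ 4 * KL h (g (n+1)) := by
      intro n
      have := kl_sum_ineq (x := h) (y := g (n+1)) hh0 hhle1 (hposall (n+1)) (hle1 n)
        (by rw [hhs, hsum1 n])
      rw [hKLdef]
      linarith
    apply tendsto_of_tendsto_of_tendsto_of_le_of_le (tendsto_const_nhds (x := (0:ℝ)))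
      (h := fun n => Real.sqrt (4 * KL h (g (n+1))))
      (by
        have h4 : Filter.Tendsto (fun n => 4 * KL h (g (n+1))) Filter.atTop (nhds 0) := by
          simpa using hatend.const_mul 4
        have h5 := (Real.continuous_sqrt.tendsto 0).comp h4
        rw [Real.sqrt_zero] at h5
        exact h5)
    · intro n; exact dist_nonneg
    · intro n
      show dist (g (n+1)) h ≤ Real.sqrt (4 * KL h (g (n+1)))
      rw [dist_pi_le_iff (Real.sqrt_nonneg _)]
      intro j
      rw [Real.dist_eq]
      have h1 : (h j - g (n+1) j)^2 ≤ ∑ j, (h j - g (n+1) j)^2 :=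
        Finset.single_le_sum (f := fun j => (h j - g (n+1) j)^2)
          (fun j _ => sq_nonneg _) (Finset.mem_univ j)
      calc |g (n+1) j - h j| = Real.sqrt ((h j - g (n+1) j)^2) := by
            rw [← Real.sqrt_sq_eq_abs]; congr 1; ring
        _ ≤ _ := Real.sqrt_le_sqrt (h1.trans (hsq4 n))
  have htend : Filter.Tendsto g Filter.atTop (nhds h) :=
    (Filter.tendsto_add_atTop_iff_nat (f := g) (l := nhds h) 1).1 htend1
  -- minimality
  refine ⟨h, hhΓ, ?_, htend⟩
  intro γ hγ
  have hγ0 : ∀ j, 0 ≤ γ j := ((hCmem i₀ γ).1 (Set.mem_iInter.1 hγ i₀)).1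
  have hγs : ∑ j, γ j = 1 := (hCfacts i₀ γ (Set.mem_iInter.1 hγ i₀)).1
  have hγle1 : ∀ j, γ j ≤ 1 := (hCfacts i₀ γ (Set.mem_iInter.1 hγ i₀)).2
  have cum : ∀ n : ℕ, KL γ (g 0) - KL γ (g (n+1)) = KL h (g 0) - KL h (g (n+1)) := by
    intro n
    induction n with
    | zero =>
      have h1 := hstepΓ γ hγ 0
      have h2 := hstepΓ h hhΓ 0
      linarith
    | succ n ih =>
      have h1 := hstepΓ γ hγ (n+1)
      have h2 := hstepΓ h hhΓ (n+1)
      show KL γ (g 0) - KL γ (g (n+1+1)) = KL h (g 0) - KL h (g (n+1+1))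
      linarith
  have hb : ∀ n : ℕ, KL h (g 0) ≤ KL γ (g 0) + KL h (g (n+1)) := by
    intro n
    have h1 := cum n
    have h2 : 0 ≤ KL γ (g (n+1)) := hKLnn γ n hγ0 hγle1 hγs
    linarith
  have hlim : Filter.Tendsto (fun n => KL γ (g 0) + KL h (g (n+1))) Filter.atTop
      (nhds (KL γ (g 0))) := by
    simpa using (tendsto_const_nhds (x := KL γ (g 0))).add hatend
  have := ge_of_tendsto hlim (Filter.Eventually.of_forall hb)
  rw [hg0] at this
  exact this
end

section
/- Let n ≥ 1, let c ∈ ℝ^n be a cost vector, and let C ⊆ ℝ_{≥0}^n be a nonempty polytope of nonnegative vectors (e.g. a transport polytope defined by marginal constraints) containing at least one strictly positive point. For ε > 0, let γ^ε be the unique minimizer over γ ∈ C of ∑_j c_j γ_j + ε ∑_j γ_j log γ_j. Then as ε → 0⁺, γ^ε converges to γ*, where γ* is the unique minimizer of the entropy ∑_j γ_j log γ_j over the set of solutions of the linear program min_{γ ∈ C} ∑_j c_j γ_j. -/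
/-!
Testing the optimality of `γ^ε` against `γ*`, and that of `γ*` for the linear program against
`γ^ε`, gives `Ent γ^ε ≤ Ent γ*` and `⟨c, γ^ε⟩ ≤ ⟨c, γ*⟩ + ε (Ent γ* - min_C Ent)`. Hence every
cluster point of `γ^ε` as `ε → 0⁺`, which exists by compactness of `C`, solves the linear program
and has entropy at most `Ent γ*`; strict convexity of the entropy on the nonnegative orthant
leaves `γ*` as the only such point.
-/

open Filter Topology

theorem StrictConvexOn.sum_comp_apply {ι : Type*} [Fintype ι] {s : Set ℝ} {φ : ℝ → ℝ}
    (hφ : StrictConvexOn ℝ s φ) :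
    StrictConvexOn ℝ (Set.univ.pi fun _ : ι => s) (fun x => ∑ i, φ (x i)) := by
  refine ⟨convex_pi fun _ _ => hφ.1, fun x hx y hy hxy a b ha hb hab => ?_⟩
  obtain ⟨j, hj⟩ := Function.ne_iff.mp hxy
  simp only [Pi.add_apply, Pi.smul_apply, smul_eq_mul, Finset.mul_sum, ← Finset.sum_add_distrib]
  refine Finset.sum_lt_sum (fun i _ => ?_) ⟨j, Finset.mem_univ j, ?_⟩
  · exact hφ.convexOn.2 (hx i trivial) (hy i trivial) ha.le hb.le hab
  · exact hφ.2 (hx j trivial) (hy j trivial) hj ha hb hab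

theorem StrictConvexOn.exists_isMinOn_forall_le_imp_eq {E : Type*} [TopologicalSpace E]
    [AddCommGroup E] [Module ℝ E] {K : Set E} {g : E → ℝ} (hg : StrictConvexOn ℝ K g)
    (hK : IsCompact K) (hne : K.Nonempty) (hcont : ContinuousOn g K) :
    ∃ x ∈ K, IsMinOn g K x ∧ ∀ y ∈ K, g y ≤ g x → y = x := by
  obtain ⟨x, hx, hmin⟩ := hK.exists_isMinOn hne hcont
  exact ⟨x, hx, hmin, fun y hy hle => hg.eq_of_isMinOn (fun z hz => hle.trans (hmin hz)) hmin hy hx⟩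

theorem setOf_isMinOn_eq_sep_le {X β : Type*} [Preorder β] {f : X → β} {K : Set X} {x₁ : X}
    (hx₁ : x₁ ∈ K) (hmin : IsMinOn f K x₁) :
    {x ∈ K | ∀ y ∈ K, f x ≤ f y} = {x ∈ K | f x ≤ f x₁} :=
  Set.sep_ext_iff.mpr fun _ _ => ⟨fun h => h x₁ hx₁, fun h _ hy => h.trans (hmin hy)⟩

theorem tendsto_nhdsGT_of_isMinOn_add_mul {X : Type*} [TopologicalSpace X] {K : Set X}
    {f g : X → ℝ} {xstar : X} {u : ℝ → X} (hK : IsCompact K) (hf : Continuous f)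
    (hg : Continuous g) (hxstar : xstar ∈ K) (hfmin : IsMinOn f K xstar)
    (huniq : ∀ x ∈ K, IsMinOn f K x → g x ≤ g xstar → x = xstar)
    (hu : ∀ ε : ℝ, 0 < ε → u ε ∈ K ∧ IsMinOn (fun x => f x + ε * g x) K (u ε)) :
    Tendsto u (𝓝[>] 0) (𝓝 xstar) := by
  obtain ⟨m, hm⟩ := hK.bddBelow_image hg.continuousOn
  have hestimates : ∀ ε : ℝ, 0 < ε →
      g (u ε) ≤ g xstar ∧ f (u ε) ≤ f xstar + ε * (g xstar - m) := by
    intro ε hε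
    obtain ⟨huK, humin⟩ := hu ε hε
    have hreg : f (u ε) + ε * g (u ε) ≤ f xstar + ε * g xstar := humin hxstar
    have hlp : f xstar ≤ f (u ε) := hfmin huK
    have hgu : g (u ε) ≤ g xstar := le_of_mul_le_mul_left (by linarith) hε
    have hmu : ε * m ≤ ε * g (u ε) := mul_le_mul_of_nonneg_left (hm ⟨_, huK, rfl⟩) hε.le
    exact ⟨hgu, by linarith⟩
  have hfu : Tendsto (f ∘ u) (𝓝[>] 0) (𝓝 (f xstar)) := by
    have hbound : Tendsto (fun ε => f xstar + ε * (g xstar - m)) (𝓝[>] 0) (𝓝 (f xstar)) := by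
      simpa using (tendsto_nhdsWithin_of_tendsto_nhds
        ((continuous_mul_const (g xstar - m)).tendsto 0)).const_add (f xstar)
    refine tendsto_of_tendsto_of_tendsto_of_le_of_le' tendsto_const_nhds hbound ?_ ?_
    · exact eventually_mem_nhdsWithin.mono fun ε hε => hfmin (hu ε hε).1
    · exact eventually_mem_nhdsWithin.mono fun ε hε => (hestimates ε hε).2
  refine hK.tendsto_nhds_of_unique_mapClusterPt
    (eventually_mem_nhdsWithin.mono fun ε hε => (hu ε hε).1) fun a ha hcl => ?_
  have hfa : f a = f xstar :=
    eq_of_nhds_neBot ((hcl.continuousAt_comp hf.continuousAt).clusterPt.mono hfu)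
  refine huniq a ha (fun x hx => hfa ▸ hfmin hx) ?_
  exact (isClosed_le hg continuous_const).mem_of_mapClusterPt hcl
    (eventually_mem_nhdsWithin.mono fun ε hε => (hestimates ε hε).1)

theorem entropic_regularization_converges_general
    (n : ℕ) (c : Fin n → ℝ)
    (C : Set (Fin n → ℝ)) (s : Finset (Fin n → ℝ))
    (hCs : C = convexHull ℝ (s : Set (Fin n → ℝ)))
    (hCne : C.Nonempty)
    (hCnonneg : C ⊆ {γ | ∀ j, 0 ≤ γ j})
    (Ent : (Fin n → ℝ) → ℝ)
    (hEnt : Ent = fun γ => ∑ j, γ j * Real.log (γ j))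
    (γeps : ℝ → (Fin n → ℝ))
    (hγeps : ∀ ε : ℝ, 0 < ε → γeps ε ∈ C ∧ ∀ γ ∈ C,
      (∑ j, c j * γeps ε j) + ε * Ent (γeps ε) ≤ (∑ j, c j * γ j) + ε * Ent γ)
    (F : Set (Fin n → ℝ))
    (hF : F = {γ ∈ C | ∀ γ' ∈ C, ∑ j, c j * γ j ≤ ∑ j, c j * γ' j}) :
    ∃ γstar ∈ F,
      (∀ γ ∈ F, Ent γstar ≤ Ent γ) ∧
      (∀ γ ∈ F, Ent γ ≤ Ent γstar → γ = γstar) ∧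
      Filter.Tendsto γeps (nhdsWithin 0 (Set.Ioi 0)) (nhds γstar) := by
  have hC : IsCompact C := hCs ▸ s.finite_toSet.isCompact_convexHull ℝ
  have hCconv : Convex ℝ C := hCs ▸ convex_convexHull ℝ _
  have hL : Continuous fun γ : Fin n → ℝ => ∑ j, c j * γ j := by fun_prop
  have hLlin : IsLinearMap ℝ fun γ : Fin n → ℝ => ∑ j, c j * γ j :=
    ⟨dotProduct_add c, fun a => dotProduct_smul a c⟩
  have hEntCont : Continuous Ent := hEnt ▸ by fun_prop
  obtain ⟨γ₁, hγ₁, hγ₁min⟩ := hC.exists_isMinOn hCne hL.continuousOn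
  rw [setOf_isMinOn_eq_sep_le hγ₁ hγ₁min] at hF
  have hFcompact : IsCompact F := hF ▸ hC.inter_right (isClosed_le hL continuous_const)
  have hFconv : Convex ℝ F := hF ▸ hCconv.inter (convex_halfSpace_le hLlin _)
  have hEntConv : StrictConvexOn ℝ F Ent := by
    refine (hEnt ▸ Real.strictConvexOn_mul_log.sum_comp_apply).subset ?_ hFconv
    exact fun γ hγ j _ => hCnonneg (hF ▸ hγ).1 j
  obtain ⟨γstar, hγstar, hmin, huniq⟩ := hEntConv.exists_isMinOn_forall_le_imp_eq hFcompact
    ⟨γ₁, hF ▸ ⟨hγ₁, le_rfl⟩⟩ hEntCont.continuousOn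
  have hγstarC : γstar ∈ C := (hF ▸ hγstar).1
  have hγstarmin : IsMinOn (fun γ => ∑ j, c j * γ j) C γstar := fun γ hγ => (hF ▸ hγstar).2.trans (hγ₁min hγ)
  refine ⟨γstar, hγstar, hmin, huniq, tendsto_nhdsGT_of_isMinOn_add_mul hC hL hEntCont hγstarC
    hγstarmin (fun γ hγ hγmin hle => huniq γ (hF ▸ ⟨hγ, hγmin hγ₁⟩) hle) hγeps⟩

/-- For a cost vector `c` and a nonempty polytope `C` of nonnegative
vectors containing a strictly positive point, the minimizers `γ^ε` of the entropically
regularized problem converge, as `ε → 0⁺`, to the unique minimizer `γ*` of the entropy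
over the set `F` of solutions of the linear program `min_{γ ∈ C} ⟨c, γ⟩`. -/
theorem entropic_regularization_converges
    (n : ℕ) (hn : 1 ≤ n) (c : Fin n → ℝ)
    (C : Set (Fin n → ℝ)) (s : Finset (Fin n → ℝ))
    (hCs : C = convexHull ℝ (s : Set (Fin n → ℝ)))
    (hCne : C.Nonempty)
    (hCnonneg : C ⊆ {γ | ∀ j, 0 ≤ γ j})
    (hCpos : ∃ γ0 ∈ C, ∀ j, 0 < γ0 j)
    (Ent : (Fin n → ℝ) → ℝ)
    (hEnt : Ent = fun γ => ∑ j, γ j * Real.log (γ j))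
    (γeps : ℝ → (Fin n → ℝ))
    (hγeps : ∀ ε : ℝ, 0 < ε → γeps ε ∈ C ∧ ∀ γ ∈ C,
      (∑ j, c j * γeps ε j) + ε * Ent (γeps ε) ≤ (∑ j, c j * γ j) + ε * Ent γ)
    (F : Set (Fin n → ℝ))
    (hF : F = {γ ∈ C | ∀ γ' ∈ C, ∑ j, c j * γ j ≤ ∑ j, c j * γ' j}) :
    ∃ γstar ∈ F,
      (∀ γ ∈ F, Ent γstar ≤ Ent γ) ∧
      (∀ γ ∈ F, Ent γ ≤ Ent γstar → γ = γstar) ∧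
      Filter.Tendsto γeps (nhdsWithin 0 (Set.Ioi 0)) (nhds γstar) :=
  entropic_regularization_converges_general n c C s hCs hCne hCnonneg Ent hEnt γeps hγeps F hF
end
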